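/- arXiv:1609.01276 — 3 statements merged into one kernel-verified Lean document; each statement's English description precedes it below -/
import Mathlib

section
/- (Stone–von Neumann–Mackey) Let ψ be a nontrivial character of (F_q, +). Then: (i) there exists an irreducible complex representation of the Heisenberg group H with central character ψ; (ii) any two irreducible complex representations of H with central character ψ are isomorphic; (iii) every irreducible complex representation of H with central character ψ has dimension q^n. -/
open Matrix
open scoped Kronecker

/-- The subgroup of invertible matrices `g` preserving the bilinear form with
matrix `M`, i.e. satisfying `gᵀ * M * g = M`. -/
def matIsom (F : Type) [Field F] (ι : Type) [Fintype ι] [DecidableEq ι]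
    (M : Matrix ι ι F) : Subgroup (Matrix ι ι F)ˣ where
  carrier := {g | (g : Matrix ι ι F)ᵀ * M * g = M}
  one_mem' := by simp
  mul_mem' := by
    intro a b ha hb
    simp only [Set.mem_setOf_eq, Units.val_mul, transpose_mul] at *
    calc (b : Matrix ι ι F)ᵀ * (a : Matrix ι ι F)ᵀ * M * ((a : Matrix ι ι F) * b)
        = (b : Matrix ι ι F)ᵀ * ((a : Matrix ι ι F)ᵀ * M * a) * b := by
          simp only [Matrix.mul_assoc]
      _ = M := by rw [ha, hb]
  inv_mem' := by
    intro a ha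
    simp only [Set.mem_setOf_eq] at *
    set b : Matrix ι ι F := ↑a⁻¹ with hb
    have h1 : (a : Matrix ι ι F) * b = 1 := by
      rw [hb, ← Units.val_mul, mul_inv_cancel, Units.val_one]
    calc bᵀ * M * b = bᵀ * ((a : Matrix ι ι F)ᵀ * M * a) * b := by rw [ha]
      _ = ((a : Matrix ι ι F) * b)ᵀ * M * ((a : Matrix ι ι F) * b) := by
          simp only [transpose_mul, Matrix.mul_assoc]
      _ = M := by rw [h1]; simp

/-- The matrix of the standard symplectic form on `F^(2n)`. -/
def Jmat (F : Type) [Field F] (n : ℕ) : Matrix (Fin n ⊕ Fin n) (Fin n ⊕ Fin n) F :=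
  fromBlocks 0 1 (-1) 0

/-- The symplectic group `Sp_{2n}(F)`: matrices with `gᵀ J g = J`. -/
abbrev Sp (F : Type) [Field F] (n : ℕ) : Subgroup (Matrix (Fin n ⊕ Fin n) (Fin n ⊕ Fin n) F)ˣ :=
  matIsom F (Fin n ⊕ Fin n) (Jmat F n)

/-- The invertible matrix `[[1, A], [0, 1]]`. -/
def shearUnit (F : Type) [Field F] (n : ℕ) (A : Matrix (Fin n) (Fin n) F) :
    (Matrix (Fin n ⊕ Fin n) (Fin n ⊕ Fin n) F)ˣ where
  val := fromBlocks 1 A 0 1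
  inv := fromBlocks 1 (-A) 0 1
  val_inv := by
    rw [fromBlocks_multiply, ← fromBlocks_one (l := Fin n) (m := Fin n)]
    simp
  inv_val := by
    rw [fromBlocks_multiply, ← fromBlocks_one (l := Fin n) (m := Fin n)]
    simp

lemma shearUnit_mem (F : Type) [Field F] (n : ℕ) (A : Matrix (Fin n) (Fin n) F)
    (hA : A.IsSymm) : shearUnit F n A ∈ Sp F n := by
  show (fromBlocks 1 A 0 1 : Matrix (Fin n ⊕ Fin n) (Fin n ⊕ Fin n) F)ᵀ * Jmat F n
      * fromBlocks 1 A 0 1 = Jmat F n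
  have := hA.eq
  simp [Jmat, fromBlocks_transpose, fromBlocks_multiply, this]

/-- The element `n_A = [[1, A], [0, 1]]` of the Siegel unipotent radical of `Sp_{2n}(F)`,
for a symmetric matrix `A`. -/
def nUnip (F : Type) [Field F] (n : ℕ) (A : Matrix (Fin n) (Fin n) F) (hA : A.IsSymm) :
    ↥(Sp F n) :=
  ⟨shearUnit F n A, shearUnit_mem F n A hA⟩

/-- A representation is irreducible if the space is nonzero and the only invariant
subspaces are `⊥` and `⊤`. -/
def IsIrredRep {G : Type} [Monoid G] {W : Type} [AddCommGroup W] [Module ℂ W]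
    (ρ : Representation ℂ G W) : Prop :=
  Nontrivial W ∧ ∀ p : Submodule ℂ W, (∀ g : G, ∀ w ∈ p, ρ g w ∈ p) → p = ⊥ ∨ p = ⊤

/-- Isomorphism of representations. -/
def RepIso {G : Type} [Monoid G] {W₁ W₂ : Type} [AddCommGroup W₁] [Module ℂ W₁]
    [AddCommGroup W₂] [Module ℂ W₂]
    (ρ₁ : Representation ℂ G W₁) (ρ₂ : Representation ℂ G W₂) : Prop :=
  ∃ e : W₁ ≃ₗ[ℂ] W₂, ∀ (g : G) (w : W₁), e (ρ₁ g w) = ρ₂ g (e w)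

/-- The multiplicity `m_B(ρ)` of the character `ψ_B : n_A ↦ ψ(Tr(B * A))` of the Siegel
unipotent radical `N` in the restriction of `ρ` to `N`. -/
noncomputable def multB {F : Type} [Field F] {n : ℕ} {W : Type} [AddCommGroup W] [Module ℂ W]
    (ρ : Representation ℂ (↥(Sp F n)) W) (ψ : AddChar F ℂ) (B : Matrix (Fin n) (Fin n) F) : ℕ :=
  Module.finrank ℂ
    ↥(⨅ A : {A : Matrix (Fin n) (Fin n) F // A.IsSymm},
      Module.End.eigenspace (ρ (nUnip F n A.1 A.2)) (ψ (Matrix.trace (B * A.1))))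

/-- Congruence of matrices: `B'` is obtained from `B` by the change-of-basis action of
an invertible matrix. -/
def MatCongruent {F : Type} [Field F] {n : ℕ} (B B' : Matrix (Fin n) (Fin n) F) : Prop :=
  ∃ C : (Matrix (Fin n) (Fin n) F)ˣ, B' = (C : Matrix (Fin n) (Fin n) F)ᵀ * B * C

/-- A bundled complex representation of `G` (on an arbitrary complex vector space). -/
structure CRep (G : Type) [Monoid G] : Type 1 where
  carrier : Type
  [acg : AddCommGroup carrier]
  [mod : Module ℂ carrier]
  ρ : Representation ℂ G carrier

attribute [instance] CRep.acg CRep.mod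

/-- The Heisenberg group attached to the bilinear form with matrix `M` on `ι → F`:
the set `(ι → F) × F` with the Heisenberg multiplication. -/
def Heis (F : Type) [Field F] (ι : Type) [Fintype ι] (M : Matrix ι ι F) : Type :=
  (ι → F) × F

namespace Heis

variable {F : Type} [Field F] {ι : Type} [Fintype ι] {M : Matrix ι ι F}

instance : Group (Heis F ι M) where
  mul a b := (a.1 + b.1, a.2 + b.2 + (2 : F)⁻¹ * (a.1 ⬝ᵥ (M *ᵥ b.1)))
  one := ((0 : ι → F), (0 : F))
  inv a := (-a.1, -a.2 + (2 : F)⁻¹ * (a.1 ⬝ᵥ (M *ᵥ a.1)))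
  mul_assoc a b c := by
    refine Prod.ext ?_ ?_
    · show (a.1 + b.1) + c.1 = a.1 + (b.1 + c.1)
      rw [add_assoc]
    · show a.2 + b.2 + 2⁻¹ * (a.1 ⬝ᵥ M *ᵥ b.1) + c.2
          + 2⁻¹ * ((a.1 + b.1) ⬝ᵥ M *ᵥ c.1)
        = a.2 + (b.2 + c.2 + 2⁻¹ * (b.1 ⬝ᵥ M *ᵥ c.1))
          + 2⁻¹ * (a.1 ⬝ᵥ M *ᵥ (b.1 + c.1))
      simp only [add_dotProduct, Matrix.mulVec_add, dotProduct_add]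
      ring
  one_mul a := by
    refine Prod.ext ?_ ?_
    · show (0 : ι → F) + a.1 = a.1
      simp
    · show 0 + a.2 + 2⁻¹ * ((0 : ι → F) ⬝ᵥ M *ᵥ a.1) = a.2
      simp
  mul_one a := by
    refine Prod.ext ?_ ?_
    · show a.1 + (0 : ι → F) = a.1
      simp
    · show a.2 + 0 + 2⁻¹ * (a.1 ⬝ᵥ M *ᵥ (0 : ι → F)) = a.2
      simp
  inv_mul_cancel a := by
    refine Prod.ext ?_ ?_
    · show -a.1 + a.1 = (0 : ι → F)
      simp
    · show -a.2 + 2⁻¹ * (a.1 ⬝ᵥ M *ᵥ a.1) + a.2 + 2⁻¹ * ((-a.1) ⬝ᵥ M *ᵥ a.1) = 0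
      simp only [neg_dotProduct]
      ring

end Heis

/-- The action of an invertible matrix `g` on the Heisenberg group: `g ⋅ (v, z) = (g v, z)`. -/
def heisAct {F : Type} [Field F] {ι : Type} [Fintype ι] {M : Matrix ι ι F}
    (g : Matrix ι ι F) (h : Heis F ι M) : Heis F ι M :=
  (g *ᵥ h.1, h.2)

/-- `π` has central character `ψ`, i.e. `π (0, z) = ψ z • 1`. -/
def HasCentralChar {F : Type} [Field F] {ι : Type} [Fintype ι] {M : Matrix ι ι F}
    {W : Type} [AddCommGroup W] [Module ℂ W]
    (π : Representation ℂ (Heis F ι M) W) (ψ : AddChar F ℂ) : Prop :=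
  ∀ z : F, π ((0, z) : Heis F ι M) = ψ z • (1 : W →ₗ[ℂ] W)

/-- `ω : Sp → GL(W)` is an oscillator representation for `π`: it satisfies the
Egorov identity `ω g ∘ π h ∘ (ω g)⁻¹ = π (g ⋅ h)`. -/
def IsOscillator {F : Type} [Field F] {ι : Type} [Fintype ι] [DecidableEq ι]
    {M : Matrix ι ι F} {W : Type} [AddCommGroup W] [Module ℂ W]
    (π : Representation ℂ (Heis F ι M) W)
    (ω : ↥(matIsom F ι M) →* (W →ₗ[ℂ] W)ˣ) : Prop :=
  ∀ (g : ↥(matIsom F ι M)) (h : Heis F ι M),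
    (ω g : W →ₗ[ℂ] W) * π h * ((ω g)⁻¹ : (W →ₗ[ℂ] W)ˣ)
      = π (heisAct ((g : (Matrix ι ι F)ˣ) : Matrix ι ι F) h)

/-- Convert a homomorphism to `GL(W)` into a representation on `W`. -/
def toRep {G : Type} [Monoid G] {W : Type} [AddCommGroup W] [Module ℂ W]
    (ω : G →* (W →ₗ[ℂ] W)ˣ) : Representation ℂ G W :=
  (Units.coeHom (W →ₗ[ℂ] W)).comp ω

/-!
Nondegeneracy of the form gives, for `v ≠ 0`, some `w` with `ψ ⟨w, v⟩ ≠ 1`. Conjugating `(v, z)`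
by `(w, 0)` multiplies it by the central element `(0, ⟨w, v⟩)`, so the character `χ` of a
representation with central character `ψ` satisfies `χ (v, z) = ψ ⟨w, v⟩ * χ (v, z)`: characters
vanish off the centre. On the centre `χ (0, z) = ψ z * dim`, so for two irreducible `π, π'` with
central character `ψ` the orthogonality relations read `dim π * dim π' / q ^ (2n) = [π ≅ π']`.
Taking `π' = π` gives `dim π = q ^ n`; then the left side is `1`, so `π ≅ π'`. For existence take
an irreducible constituent of the representation induced from `ψ` on the centre.
-/

namespace FiniteField

theorem two_ne_zero_of_odd_card {F : Type*} [Field F] [Fintype F]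
    (hodd : Odd (Fintype.card F)) : (2 : F) ≠ 0 :=
  Ring.two_ne_zero fun h ↦ by
    have := even_card_of_char_two h
    rw [Nat.odd_iff] at hodd
    omega

end FiniteField

theorem AddChar.exists_apply_dotProduct_ne_one {F R ι : Type*} [Field F] [Monoid R]
    [Fintype ι] [DecidableEq ι] {ψ : AddChar F R} (hψ : ψ ≠ 1) {u : ι → F} (hu : u ≠ 0) :
    ∃ w : ι → F, ψ (w ⬝ᵥ u) ≠ 1 := by
  obtain ⟨i, hi⟩ := Function.ne_iff.mp hu
  obtain ⟨t, ht⟩ := AddChar.ne_one_iff.mp hψ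
  refine ⟨Pi.single i (t / u i), ?_⟩
  rwa [single_dotProduct, div_mul_cancel₀ _ hi]

section Irreducible

variable {G : Type} [Monoid G] {W : Type} [AddCommGroup W] [Module ℂ W]
  {ρ : Representation ℂ G W}

theorem IsIrredRep.isIrreducible (h : IsIrredRep ρ) : ρ.IsIrreducible := by
  obtain ⟨hW, hirr⟩ := h
  refine { exists_pair_ne := ⟨⊥, ⊤, fun h ↦ ?_⟩, eq_bot_or_eq_top := fun σ ↦ ?_ }
  · exact bot_ne_top (congrArg Subrepresentation.toSubmodule h)
  · exact (hirr σ.toSubmodule σ.apply_mem_toSubmodule).imp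
      (fun h ↦ Subrepresentation.toSubmodule_injective h)
      (fun h ↦ Subrepresentation.toSubmodule_injective h)

theorem IsIrredRep.finiteDimensional [Finite G] (h : IsIrredRep ρ) : FiniteDimensional ℂ W := by
  obtain ⟨hW, hirr⟩ := h
  obtain ⟨w, hw⟩ := exists_ne (0 : W)
  set p := Submodule.span ℂ (Set.range fun g : G ↦ ρ g w)
  have hp : ∀ g : G, p ≤ p.comap (ρ g) := fun g ↦ Submodule.span_le.mpr <| by
    rintro _ ⟨g', rfl⟩
    exact Submodule.subset_span ⟨g * g', by simp⟩
  have hwp : w ∈ p := Submodule.subset_span ⟨1, by simp⟩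
  rcases hirr p (fun g _ hv ↦ hp g hv) with hbot | htop
  · exact absurd (hbot ▸ hwp) (by simpa using hw)
  · have : FiniteDimensional ℂ p := FiniteDimensional.span_of_finite ℂ (Set.finite_range _)
    rw [htop] at this
    exact Module.Finite.equiv Submodule.topEquiv

theorem Subrepresentation.isIrredRep_toRepresentation_of_isAtom {σ : Subrepresentation ρ}
    (hσ : IsAtom σ) : IsIrredRep σ.toRepresentation := by
  refine ⟨Submodule.nontrivial_iff_ne_bot.mpr fun h ↦ hσ.1 (toSubmodule_injective h),
    fun p hp ↦ ?_⟩
  let τ : Subrepresentation ρ :=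
    ⟨p.map σ.toSubmodule.subtype, by rintro g _ ⟨v, hv, rfl⟩; exact ⟨_, hp g v hv, rfl⟩⟩
  have hτ : τ ≤ σ := by
    rintro _ ⟨v, -, rfl⟩
    exact v.2
  have hinj := Submodule.map_injective_of_injective σ.toSubmodule.injective_subtype
  refine (hσ.le_iff.mp hτ).imp (fun h ↦ hinj ?_) (fun h ↦ hinj ?_)
  · rw [Submodule.map_bot]
    exact congrArg toSubmodule h
  · rw [Submodule.map_subtype_top]
    exact congrArg toSubmodule h

theorem Representation.exists_subrepresentation_isIrredRep [FiniteDimensional ℂ W] [Nontrivial W]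
    (ρ : Representation ℂ G W) : ∃ σ : Subrepresentation ρ, IsIrredRep σ.toRepresentation := by
  have : WellFoundedLT (Subrepresentation ρ) :=
    StrictMono.wellFoundedLT (f := Subrepresentation.toSubmodule) fun _ _ h ↦ h
  have : IsAtomic (Subrepresentation ρ) := isAtomic_of_orderBot_wellFounded_lt wellFounded_lt
  obtain ⟨σ, hσ, -⟩ := (eq_bot_or_exists_atom_le (⊤ : Subrepresentation ρ)).resolve_left
    fun h ↦ bot_ne_top (congrArg Subrepresentation.toSubmodule h).symm
  exact ⟨σ, Subrepresentation.isIrredRep_toRepresentation_of_isAtom hσ⟩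

end Irreducible

namespace Heis

variable {F : Type} [Field F] {ι : Type} [Fintype ι] {M : Matrix ι ι F}

instance [Fintype F] [DecidableEq ι] : Fintype (Heis F ι M) :=
  inferInstanceAs (Fintype ((ι → F) × F))

def center (z : F) : Heis F ι M := (0, z)

theorem center_inv (z : F) : (center z : Heis F ι M)⁻¹ = center (-z) := by
  show ((-0 : ι → F), -z + (2 : F)⁻¹ * ((0 : ι → F) ⬝ᵥ M *ᵥ 0)) = (0, -z)
  simp

theorem mul_eq_center_mul_mul_swap (h2 : (2 : F) ≠ 0) (hskew : Mᵀ = -M) (a b : Heis F ι M) :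
    a * b = center (a.1 ⬝ᵥ M *ᵥ b.1) * (b * a) := by
  have hswap : b.1 ⬝ᵥ M *ᵥ a.1 = -(a.1 ⬝ᵥ M *ᵥ b.1) := by
    rw [dotProduct_mulVec, ← mulVec_transpose, hskew, neg_mulVec, neg_dotProduct,
      dotProduct_comm]
  refine Prod.ext ?_ ?_
  · show a.1 + b.1 = 0 + (b.1 + a.1)
    rw [zero_add, add_comm]
  · show a.2 + b.2 + 2⁻¹ * (a.1 ⬝ᵥ M *ᵥ b.1) = a.1 ⬝ᵥ M *ᵥ b.1
        + (b.2 + a.2 + 2⁻¹ * (b.1 ⬝ᵥ M *ᵥ a.1)) + 2⁻¹ * ((0 : ι → F) ⬝ᵥ M *ᵥ (b.1 + a.1))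
    rw [hswap, zero_dotProduct]
    linear_combination (a.1 ⬝ᵥ M *ᵥ b.1) * mul_inv_cancel₀ h2

theorem mul_mul_inv_eq_center_mul (h2 : (2 : F) ≠ 0) (hskew : Mᵀ = -M) (a b : Heis F ι M) :
    a * b * a⁻¹ = center (a.1 ⬝ᵥ M *ᵥ b.1) * b := by
  rw [mul_inv_eq_iff_eq_mul, mul_assoc]
  exact mul_eq_center_mul_mul_swap h2 hskew a b

theorem card_eq [Fintype F] [DecidableEq ι] :
    Fintype.card (Heis F ι M) = Fintype.card F ^ Fintype.card ι * Fintype.card F := by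
  rw [← Fintype.card_fun]
  exact Fintype.card_prod _ _

/-- `f x` stands for `f' (x, 0)`, where `f'` is a function on the group with
`f' ((0, z) * g) = ψ z * f' g`; the action is right translation, so this is the representation
induced from the character `ψ` of the centre. -/
def inducedCenterRep (ψ : AddChar F ℂ) : Representation ℂ (Heis F ι M) ((ι → F) → ℂ) where
  toFun h :=
    { toFun := fun f x ↦ ψ (h.2 + (2 : F)⁻¹ * (x ⬝ᵥ M *ᵥ h.1)) * f (x + h.1)
      map_add' f f' := by
        funext x
        simp [mul_add]
      map_smul' c f := by
        funext x
        simp only [Pi.smul_apply, smul_eq_mul, RingHom.id_apply]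
        ring }
  map_one' := by
    refine LinearMap.ext fun f ↦ funext fun x ↦ ?_
    show ψ ((0 : F) + (2 : F)⁻¹ * (x ⬝ᵥ M *ᵥ (0 : ι → F))) * f (x + (0 : ι → F)) = f x
    simp
  map_mul' g h := by
    refine LinearMap.ext fun f ↦ funext fun x ↦ ?_
    show ψ ((g.2 + h.2 + (2 : F)⁻¹ * (g.1 ⬝ᵥ M *ᵥ h.1)) + (2 : F)⁻¹ * (x ⬝ᵥ M *ᵥ (g.1 + h.1)))
        * f (x + (g.1 + h.1))
      = ψ (g.2 + (2 : F)⁻¹ * (x ⬝ᵥ M *ᵥ g.1)) *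
        (ψ (h.2 + (2 : F)⁻¹ * ((x + g.1) ⬝ᵥ M *ᵥ h.1)) * f ((x + g.1) + h.1))
    rw [← mul_assoc, ← AddChar.map_add_eq_mul, ← add_assoc x g.1 h.1]
    congr 2
    simp only [mulVec_add, dotProduct_add, add_dotProduct]
    ring

theorem hasCentralChar_inducedCenterRep (ψ : AddChar F ℂ) :
    HasCentralChar (inducedCenterRep (M := M) ψ) ψ := fun z ↦ by
  refine LinearMap.ext fun f ↦ funext fun x ↦ ?_
  show ψ (z + (2 : F)⁻¹ * (x ⬝ᵥ M *ᵥ (0 : ι → F))) * f (x + (0 : ι → F)) = (ψ z • f) x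
  simp

end Heis

section CentralCharacter

variable {F : Type} [Field F] {ι : Type} [Fintype ι] {M : Matrix ι ι F} {ψ : AddChar F ℂ}
  {W : Type} [AddCommGroup W] [Module ℂ W] {π : Representation ℂ (Heis F ι M) W}

theorem HasCentralChar.toRepresentation (hc : HasCentralChar π ψ) (σ : Subrepresentation π) :
    HasCentralChar σ.toRepresentation ψ := fun z ↦
  LinearMap.ext fun v ↦ Subtype.ext <| by
    simp [Subrepresentation.toRepresentation, hc z]

theorem HasCentralChar.apply_center_mul (hc : HasCentralChar π ψ) (z : F) (g : Heis F ι M) :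
    π (Heis.center z * g) = ψ z • π g := by
  rw [map_mul, show π (Heis.center z) = _ from hc z, smul_mul_assoc, one_mul]

theorem HasCentralChar.character_center [FiniteDimensional ℂ W] (hc : HasCentralChar π ψ)
    (z : F) :
    π.character (Heis.center z) = ψ z * Module.finrank ℂ W := by
  rw [Representation.character, show π (Heis.center z) = _ from hc z, map_smul,
    LinearMap.trace_one, smul_eq_mul]

theorem HasCentralChar.character_eq_zero_of_apply_ne_one (h2 : (2 : F) ≠ 0) (hskew : Mᵀ = -M)
    (hc : HasCentralChar π ψ) {g : Heis F ι M} {w : ι → F} (hw : ψ (w ⬝ᵥ M *ᵥ g.1) ≠ 1) :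
    π.character g = 0 := by
  set c := w ⬝ᵥ M *ᵥ g.1
  let a : Heis F ι M := (w, 0)
  have h : π.character g = ψ c * π.character g :=
    calc π.character g = π.character (a * g * a⁻¹) := (π.char_conj g a).symm
      _ = π.character (Heis.center c * g) := by
        rw [Heis.mul_mul_inv_eq_center_mul h2 hskew]
      _ = ψ c * π.character g := by
        rw [Representation.character, hc.apply_center_mul, map_smul, smul_eq_mul]
        rfl
  have h' : (ψ c - 1) * π.character g = 0 := by linear_combination -h
  exact (mul_eq_zero.mp h').resolve_left (sub_ne_zero.mpr hw)

theorem HasCentralChar.character_eq_zero_of_ne_zero [DecidableEq ι] (h2 : (2 : F) ≠ 0)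
    (hskew : Mᵀ = -M) (hM : IsUnit M) (hψ : ψ ≠ 1) (hc : HasCentralChar π ψ)
    {g : Heis F ι M} (hg : g.1 ≠ 0) : π.character g = 0 := by
  have hMg : M *ᵥ g.1 ≠ 0 := fun h ↦
    hg (mulVec_injective_iff_isUnit.mpr hM (h.trans (mulVec_zero M).symm))
  obtain ⟨w, hw⟩ := AddChar.exists_apply_dotProduct_ne_one hψ hMg
  exact hc.character_eq_zero_of_apply_ne_one h2 hskew hw

variable [Fintype F] [DecidableEq ι] [FiniteDimensional ℂ W] {W' : Type} [AddCommGroup W']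
  [Module ℂ W'] [FiniteDimensional ℂ W'] {π' : Representation ℂ (Heis F ι M) W'}

theorem HasCentralChar.card_inv_mul_sum_char_mul_char_eq (h2 : (2 : F) ≠ 0) (hskew : Mᵀ = -M)
    (hM : IsUnit M) (hψ : ψ ≠ 1) (hc : HasCentralChar π ψ) (hc' : HasCentralChar π' ψ) :
    (Nat.card (Heis F ι M) : ℂ)⁻¹ * ∑ g, π.character g * π'.character g⁻¹ =
      Module.finrank ℂ W * Module.finrank ℂ W' / Fintype.card F ^ Fintype.card ι := by
  set d : ℂ := (Module.finrank ℂ W : ℂ)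
  set d' : ℂ := (Module.finrank ℂ W' : ℂ)
  have hcenter (z : F) :
      π.character (Heis.center z) * π'.character (Heis.center z)⁻¹ = d * d' := by
    rw [Heis.center_inv, hc.character_center, hc'.character_center]
    have : ψ z * ψ (-z) = 1 := by rw [← AddChar.map_add_eq_mul, add_neg_cancel,
      AddChar.map_zero_eq_one]
    linear_combination d * d' * this
  have hsum : ∑ g, π.character g * π'.character g⁻¹ = Fintype.card F * (d * d') := by
    refine (Fintype.sum_prod_type _).trans ?_
    rw [Finset.sum_eq_single 0]
    · exact (Finset.sum_congr rfl fun z _ ↦ hcenter z).trans (by simp)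
    · exact fun v _ hv ↦ Finset.sum_eq_zero fun z _ ↦
        mul_eq_zero_of_left (hc.character_eq_zero_of_ne_zero h2 hskew hM hψ (g := (v, z)) hv) _
    · simp
  rw [hsum, Nat.card_eq_fintype_card, Heis.card_eq]
  push_cast
  field_simp

theorem HasCentralChar.finrank_sq_eq_card_pow (h2 : (2 : F) ≠ 0) (hskew : Mᵀ = -M) (hM : IsUnit M)
    (hψ : ψ ≠ 1) [π.IsIrreducible] (hc : HasCentralChar π ψ) :
    Module.finrank ℂ W ^ 2 = Fintype.card F ^ Fintype.card ι := by
  have : Invertible (Nat.card (Heis F ι M) : ℂ) := invertibleOfNonzero (by simp)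
  have h := π.char_orthonormal π
  rw [hc.card_inv_mul_sum_char_mul_char_eq h2 hskew hM hψ hc, if_pos ⟨.refl π⟩,
    div_eq_one_iff_eq (by simp)] at h
  exact_mod_cast (sq _).trans h

theorem HasCentralChar.nonempty_equiv (h2 : (2 : F) ≠ 0) (hskew : Mᵀ = -M) (hM : IsUnit M)
    (hψ : ψ ≠ 1) [π.IsIrreducible] [π'.IsIrreducible] (hc : HasCentralChar π ψ)
    (hc' : HasCentralChar π' ψ) :
    Nonempty (π.Equiv π') := by
  by_contra hne
  have : Invertible (Nat.card (Heis F ι M) : ℂ) := invertibleOfNonzero (by simp)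
  have h := π'.char_orthonormal π
  rw [hc'.card_inv_mul_sum_char_mul_char_eq h2 hskew hM hψ hc, if_neg hne] at h
  rw [div_eq_zero_iff, or_iff_left (by simp), mul_eq_zero, Nat.cast_eq_zero,
    Nat.cast_eq_zero] at h
  rcases h with h | h
  · simpa [h, eq_comm] using hc'.finrank_sq_eq_card_pow h2 hskew hM hψ
  · simpa [h, eq_comm] using hc.finrank_sq_eq_card_pow h2 hskew hM hψ

end CentralCharacter

theorem transpose_Jmat (F : Type) [Field F] (n : ℕ) : (Jmat F n)ᵀ = -Jmat F n := by
  simp [Jmat, fromBlocks_transpose, fromBlocks_neg]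

theorem isUnit_Jmat (F : Type) [Field F] (n : ℕ) : IsUnit (Jmat F n) := by
  refine .of_mul_eq_one (-Jmat F n) ?_
  simp [Jmat, fromBlocks_neg, fromBlocks_multiply]

theorem stone_von_neumann_mackey_general
    (F : Type) [Field F] [Fintype F] (hodd : Odd (Fintype.card F))
    (n : ℕ)
    (ψ : AddChar F ℂ) (hψ : ψ ≠ 1) :
    (∃ P : CRep (Heis F (Fin n ⊕ Fin n) (Jmat F n)),
      IsIrredRep P.ρ ∧ HasCentralChar P.ρ ψ) ∧
    (∀ P Q : CRep (Heis F (Fin n ⊕ Fin n) (Jmat F n)),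
      IsIrredRep P.ρ → HasCentralChar P.ρ ψ →
      IsIrredRep Q.ρ → HasCentralChar Q.ρ ψ → RepIso P.ρ Q.ρ) ∧
    (∀ P : CRep (Heis F (Fin n ⊕ Fin n) (Jmat F n)),
      IsIrredRep P.ρ → HasCentralChar P.ρ ψ →
      Module.finrank ℂ P.carrier = Fintype.card F ^ n) := by
  have h2 := FiniteField.two_ne_zero_of_odd_card hodd
  have hskew := transpose_Jmat F n
  have hJ := isUnit_Jmat F n
  refine ⟨?_, fun P Q hP hPc hQ hQc ↦ ?_, fun P hP hc ↦ ?_⟩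
  · obtain ⟨σ, hσ⟩ := Representation.exists_subrepresentation_isIrredRep
      (Heis.inducedCenterRep (M := Jmat F n) ψ)
    exact ⟨⟨σ.toSubmodule, σ.toRepresentation⟩, hσ,
      (Heis.hasCentralChar_inducedCenterRep ψ).toRepresentation σ⟩
  · have := hP.finiteDimensional
    have := hQ.finiteDimensional
    have := hP.isIrreducible
    have := hQ.isIrreducible
    obtain ⟨φ⟩ := hPc.nonempty_equiv h2 hskew hJ hψ hQc
    exact ⟨φ.toLinearEquiv, φ.isIntertwining⟩
  · have := hP.finiteDimensional
    have := hP.isIrreducible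
    refine Nat.pow_left_injective two_ne_zero ?_
    simp only [hc.finrank_sq_eq_card_pow h2 hskew hJ hψ, Fintype.card_sum, Fintype.card_fin]
    ring

/-- **Stone–von Neumann–Mackey.** For a nontrivial additive character `ψ`
of `F_q`: (i) there exists an irreducible complex representation of the Heisenberg group
with central character `ψ`; (ii) any two such are isomorphic; (iii) any such has
dimension `q^n`. -/
theorem stone_von_neumann_mackey
    (F : Type) [Field F] [Fintype F] (hodd : Odd (Fintype.card F))
    (n : ℕ) (hn : 0 < n)
    (ψ : AddChar F ℂ) (hψ : ψ ≠ 1) :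
    (∃ P : CRep (Heis F (Fin n ⊕ Fin n) (Jmat F n)),
      IsIrredRep P.ρ ∧ HasCentralChar P.ρ ψ) ∧
    (∀ P Q : CRep (Heis F (Fin n ⊕ Fin n) (Jmat F n)),
      IsIrredRep P.ρ → HasCentralChar P.ρ ψ →
      IsIrredRep Q.ρ → HasCentralChar Q.ρ ψ → RepIso P.ρ Q.ρ) ∧
    (∀ P : CRep (Heis F (Fin n ⊕ Fin n) (Jmat F n)),
      IsIrredRep P.ρ → HasCentralChar P.ρ ψ →
      Module.finrank ℂ P.carrier = Fintype.card F ^ n) :=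
  stone_von_neumann_mackey_general F hodd n ψ hψ
end

section
/- Let π be an irreducible complex representation of the Heisenberg group H on W (so dim W = q^n) with nontrivial central character, and let ω be an oscillator representation for π. Then W is the direct sum of the (+1)-eigenspace and the (−1)-eigenspace of ω(−I_{2n}), each of these two eigenspaces is an irreducible subrepresentation of ω as a representation of Sp_{2n}(F_q), and their dimensions are (q^n + 1)/2 and (q^n − 1)/2 in some order. In particular, ω has exactly two irreducible constituents, each occurring with multiplicity one. -/
open Matrix
open scoped Kronecker

/-- Congruence of matrices: `B'` is obtained from `B` by the change-of-basis action of
an invertible matrix. -/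
def Congruent' {F : Type} [Field F] {n : ℕ} (B B' : Matrix (Fin n) (Fin n) F) : Prop :=
  ∃ C : (Matrix (Fin n) (Fin n) F)ˣ, B' = (C : Matrix (Fin n) (Fin n) F)ᵀ * B * C

lemma negI_mem (F : Type) [Field F] (n : ℕ) :
    (-1 : (Matrix (Fin n ⊕ Fin n) (Fin n ⊕ Fin n) F)ˣ) ∈ Sp F n := by
  show ((-1 : (Matrix (Fin n ⊕ Fin n) (Fin n ⊕ Fin n) F)ˣ) : Matrix _ _ F)ᵀ * Jmat F n
      * ((-1 : (Matrix (Fin n ⊕ Fin n) (Fin n ⊕ Fin n) F)ˣ) : Matrix _ _ F) = Jmat F n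
  simp

/-- The element `-I` of `Sp_{2n}(F)`. -/
def negI (F : Type) [Field F] (n : ℕ) : ↥(Sp F n) := ⟨-1, negI_mem F n⟩

/-- A submodule is invariant under a representation. -/
def InvariantUnder {G : Type} [Monoid G] {W : Type} [AddCommGroup W] [Module ℂ W]
    (ρ : Representation ℂ G W) (p : Submodule ℂ W) : Prop :=
  ∀ g : G, ∀ w ∈ p, ρ g w ∈ p

/-- `p` is an invariant subspace on which `ρ` restricts to an irreducible
subrepresentation. -/
def IsIrreducibleSubrep {G : Type} [Monoid G] {W : Type} [AddCommGroup W] [Module ℂ W]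
    (ρ : Representation ℂ G W) (p : Submodule ℂ W) : Prop :=
  InvariantUnder ρ p ∧ p ≠ ⊥ ∧
    ∀ s : Submodule ℂ W, s ≤ p → InvariantUnder ρ s → s = ⊥ ∨ s = p

/-- Isomorphism of the subrepresentations carried by invariant subspaces `p`, `p'` of
representations `ρ`, `ρ'`. -/
def SubRepIso {G : Type} [Monoid G] {W W' : Type} [AddCommGroup W] [Module ℂ W]
    [AddCommGroup W'] [Module ℂ W']
    (ρ : Representation ℂ G W) (ρ' : Representation ℂ G W')
    (p : Submodule ℂ W) (p' : Submodule ℂ W') : Prop :=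
  ∃ e : ↥p ≃ₗ[ℂ] ↥p', ∀ (g : G) (w w₂ : ↥p), ρ g ↑w = (w₂ : W) →
    ρ' g ↑(e w) = ((e w₂ : ↥p') : W')

/-- The multiplicity of the character `n_A ↦ ψ((1/2) Tr(B * A))` of the Siegel unipotent
radical in the subrepresentation carried by the invariant subspace `p`. -/
noncomputable def multBOn {F : Type} [Field F] {n : ℕ} {W : Type} [AddCommGroup W] [Module ℂ W]
    (ρ : Representation ℂ (↥(Sp F n)) W) (ψ : AddChar F ℂ) (B : Matrix (Fin n) (Fin n) F)
    (p : Submodule ℂ W) : ℕ :=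
  Module.finrank ℂ
    ↥(p ⊓ ⨅ A : {A : Matrix (Fin n) (Fin n) F // A.IsSymm},
      Module.End.eigenspace (ρ (nUnip F n A.1 A.2)) (ψ ((2 : F)⁻¹ * Matrix.trace (B * A.1))))

/-- The multiplicity `m'_B(ρ)` of the character `n_A ↦ ψ((1/2) Tr(B * A))` of the Siegel
unipotent radical `N` in the restriction of `ρ` to `N`. -/
noncomputable def multB' {F : Type} [Field F] {n : ℕ} {W : Type} [AddCommGroup W] [Module ℂ W]
    (ρ : Representation ℂ (↥(Sp F n)) W) (ψ : AddChar F ℂ) (B : Matrix (Fin n) (Fin n) F) : ℕ :=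
  Module.finrank ℂ
    ↥(⨅ A : {A : Matrix (Fin n) (Fin n) F // A.IsSymm},
      Module.End.eigenspace (ρ (nUnip F n A.1 A.2)) (ψ ((2 : F)⁻¹ * Matrix.trace (B * A.1))))

/-- The symmetric bilinear form `β_T(x, x') = β(Tx, Tx')` on `F^n`, where `β` is the
bilinear form on `F^k` with Gram matrix `G`. -/
def betaT {F : Type} [Field F] {k n : ℕ} (G : Matrix (Fin k) (Fin k) F)
    (T : Matrix (Fin k) (Fin n) F) : (Fin n → F) → (Fin n → F) → F :=
  fun x x' => (T *ᵥ x) ⬝ᵥ (G *ᵥ (T *ᵥ x'))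

/-- The subgroup of invertible matrices preserving a bilinear form `Φ` on `ι → F`. -/
def formStab (F : Type) [Field F] (ι : Type) [Fintype ι] [DecidableEq ι]
    (Φ : (ι → F) → (ι → F) → F) : Subgroup (Matrix ι ι F)ˣ where
  carrier := {g | ∀ x y : ι → F, Φ ((g : Matrix ι ι F) *ᵥ x) ((g : Matrix ι ι F) *ᵥ y) = Φ x y}
  one_mem' := by intro x y; simp
  mul_mem' := by
    intro a b ha hb x y
    simp only [Units.val_mul, ← Matrix.mulVec_mulVec]
    rw [ha, hb]
  inv_mem' := by
    intro a ha x y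
    have h : ∀ v : ι → F, (a : Matrix ι ι F) *ᵥ (((a⁻¹ : (Matrix ι ι F)ˣ) : Matrix ι ι F) *ᵥ v) = v := by
      intro v
      rw [Matrix.mulVec_mulVec, ← Units.val_mul, mul_inv_cancel, Units.val_one, Matrix.one_mulVec]
    calc Φ ((a⁻¹ : (Matrix ι ι F)ˣ) *ᵥ x) ((a⁻¹ : (Matrix ι ι F)ˣ) *ᵥ y)
        = Φ ((a : Matrix ι ι F) *ᵥ ((a⁻¹ : (Matrix ι ι F)ˣ) *ᵥ x))
            ((a : Matrix ι ι F) *ᵥ ((a⁻¹ : (Matrix ι ι F)ˣ) *ᵥ y)) := (ha _ _).symm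
      _ = Φ x y := by rw [h, h]

/-- The `n × n` matrix `diag(G, 0)` obtained by placing `G` in the upper-left `k × k`
corner and zeros elsewhere. -/
def diagEmbed {F : Type} [Field F] {k n : ℕ} (G : Matrix (Fin k) (Fin k) F) (h : k ≤ n) :
    Matrix (Fin n) (Fin n) F :=
  Matrix.reindex (finSumFinEquiv.trans (finCongr (Nat.add_sub_cancel' h)))
    (finSumFinEquiv.trans (finCongr (Nat.add_sub_cancel' h)))
    (fromBlocks G 0 0 (0 : Matrix (Fin (n - k)) (Fin (n - k)) F))

/-!
The operators `π (v, 0)`, `v ∈ V`, have trace zero for `v ≠ 0` (conjugation by `π (w, 0)`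
multiplies them by `ψ ⟨w, v⟩`), hence are linearly independent in `End W`; and `W` is spanned
by the `q^n` translates `π (0 ⊕ b, 0) w₀` of a vector `w₀` fixed by the Lagrangian `F^n ⊕ 0`.
So `dim W = q^n` and the `π (v, 0)` form a basis of `End W`. Conjugation by `ω g` permutes
this basis as `g` permutes `V`, and `Sp_{2n}` is transitive on `V ∖ 0`, so every operator
commuting with `ω` is a combination of `1` and `Q = ∑ v, π (v, 0)`. Since `ω(-I)` is such an
operator and, like `Q` but unlike `1`, conjugates `π (v, 0)` into `π (-v, 0)`, it is a multiple
of `Q`. Hence the commutant of `ω` acts by scalars on the eigenspaces of `ω(-I)`, which are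
therefore irreducible by Maschke's theorem. Finally `Q² = q^{2n}` and `tr Q = q^n` give
`(tr ω(-I))² = 1`: the two eigenspace dimensions differ by one.
-/

open Matrix

section SymplecticForm

variable {F : Type} [Field F] {n : ℕ}

def symp (F : Type) [Field F] (n : ℕ) : LinearMap.BilinForm F (Fin n ⊕ Fin n → F) :=
  Matrix.toLinearMap₂' F (Jmat F n)

lemma symp_apply (v w : Fin n ⊕ Fin n → F) : symp F n v w = v ⬝ᵥ (Jmat F n *ᵥ w) :=
  Matrix.toLinearMap₂'_apply' _ _ _

lemma symp_eq (v w : Fin n ⊕ Fin n → F) :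
    symp F n v w = (v ∘ Sum.inl) ⬝ᵥ (w ∘ Sum.inr) - (v ∘ Sum.inr) ⬝ᵥ (w ∘ Sum.inl) := by
  rw [symp_apply, Jmat, ← Sum.elim_comp_inl_inr v, ← Sum.elim_comp_inl_inr w, fromBlocks_mulVec,
    sumElim_dotProduct_sumElim]
  simp [sub_eq_add_neg, neg_mulVec]

lemma symp_self (v : Fin n ⊕ Fin n → F) : symp F n v v = 0 := by
  rw [symp_eq, dotProduct_comm, sub_self]

lemma symp_swap (v w : Fin n ⊕ Fin n → F) : symp F n v w = -symp F n w v := by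
  rw [symp_eq, symp_eq, dotProduct_comm (v ∘ Sum.inl), dotProduct_comm (v ∘ Sum.inr), neg_sub]

lemma Jmat_mul_self : Jmat F n * Jmat F n = -1 := by
  rw [Jmat, fromBlocks_multiply, ← fromBlocks_one, fromBlocks_neg]
  simp

lemma Jmat_mulVec_ne_zero {v : Fin n ⊕ Fin n → F} (hv : v ≠ 0) : Jmat F n *ᵥ v ≠ 0 := by
  intro h
  apply hv
  simpa [Jmat_mul_self, neg_mulVec] using congrArg (Jmat F n *ᵥ ·) h

lemma exists_symp_ne_zero {v : Fin n ⊕ Fin n → F} (hv : v ≠ 0) : ∃ w, symp F n w v ≠ 0 := by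
  obtain ⟨i, hi⟩ := Function.ne_iff.mp (Jmat_mulVec_ne_zero hv)
  exact ⟨Pi.single i 1, by simpa [symp_apply] using hi⟩

lemma symp_inl_inl (x y : Fin n → F) : symp F n (x ⊕ᵥ 0) (y ⊕ᵥ 0) = 0 := by
  simp [symp_eq]

lemma symp_inr_inl (b x : Fin n → F) : symp F n (0 ⊕ᵥ b) (x ⊕ᵥ 0) = -(b ⬝ᵥ x) := by
  simp [symp_eq]

lemma symp_inr_inr (a b : Fin n → F) : symp F n (0 ⊕ᵥ a) (0 ⊕ᵥ b) = 0 := by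
  simp [symp_eq]

end SymplecticForm

lemma sum_addChar_dotProduct_eq_zero {F R : Type} [Field F] [Fintype F] [CommRing R] [IsDomain R]
    {ι : Type} [Fintype ι] [DecidableEq ι] {ψ : AddChar F R} (hψ : ψ ≠ 1) {x : ι → F}
    (hx : x ≠ 0) : ∑ b : ι → F, ψ (b ⬝ᵥ x) = 0 := by
  let f : (ι → F) →+ F := AddMonoidHom.mk' (· ⬝ᵥ x) fun a b => add_dotProduct a b x
  refine AddChar.sum_eq_zero_of_ne_one (ψ := ψ.compAddMonoidHom f) fun h => ?_
  obtain ⟨t, ht⟩ := AddChar.ne_one_iff.mp hψ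
  obtain ⟨i, hi⟩ := Function.ne_iff.mp hx
  apply ht
  simpa [f, div_mul_cancel₀ t hi] using DFunLike.congr_fun h (Pi.single i (t / x i))

lemma AddChar.apply_ne_zero {A R : Type} [AddGroup A] [CommRing R] [Nontrivial R]
    (ψ : AddChar A R) (a : A) : ψ a ≠ 0 := fun h => by
  simpa [h] using ψ.map_add_eq_mul a (-a)

lemma two_ne_zero_of_odd_card {F : Type} [Field F] [Fintype F] (hodd : Odd (Fintype.card F)) :
    (2 : F) ≠ 0 :=
  Ring.two_ne_zero fun h => by
    have := FiniteField.even_card_iff_char_two.mp h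
    rw [Nat.odd_iff] at hodd
    omega

section Sp

variable {F : Type} [Field F] {n : ℕ}

abbrev Sp.mat (g : Sp F n) : Matrix (Fin n ⊕ Fin n) (Fin n ⊕ Fin n) F :=
  ((g : (Matrix (Fin n ⊕ Fin n) (Fin n ⊕ Fin n) F)ˣ) : Matrix (Fin n ⊕ Fin n) (Fin n ⊕ Fin n) F)

lemma mem_Sp_of_symp_mulVec (g : (Matrix (Fin n ⊕ Fin n) (Fin n ⊕ Fin n) F)ˣ)
    (hg : ∀ x y, symp F n (g.val *ᵥ x) (g.val *ᵥ y) = symp F n x y) : g ∈ Sp F n := by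
  show g.valᵀ * Jmat F n * g.val = Jmat F n
  refine (Matrix.toLinearMap₂' F (S₁ := F) (S₂ := F)).injective ?_
  rw [← Matrix.toLinearMap₂'_comp]
  exact LinearMap.ext₂ hg

def Sp.ofLinearEquiv (e : (Fin n ⊕ Fin n → F) ≃ₗ[F] (Fin n ⊕ Fin n → F))
    (he : ∀ x y, symp F n (e x) (e y) = symp F n x y) : Sp F n :=
  ⟨⟨LinearMap.toMatrix' e, LinearMap.toMatrix' e.symm,
    by rw [← LinearMap.toMatrix'_comp, LinearEquiv.comp_coe, e.symm_trans_self]; simp,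
    by rw [← LinearMap.toMatrix'_comp, LinearEquiv.comp_coe, e.self_trans_symm]; simp⟩,
    mem_Sp_of_symp_mulVec _ fun x y => by simpa [LinearMap.toMatrix'_mulVec] using he x y⟩

lemma Sp.ofLinearEquiv_mulVec (e : (Fin n ⊕ Fin n → F) ≃ₗ[F] (Fin n ⊕ Fin n → F))
    (he : ∀ x y, symp F n (e x) (e y) = symp F n x y) (x : Fin n ⊕ Fin n → F) :
    Sp.mat (Sp.ofLinearEquiv e he) *ᵥ x = e x :=
  LinearMap.toMatrix'_mulVec _ x

def sympTransvection (w : Fin n ⊕ Fin n → F) (c : F) :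
    (Fin n ⊕ Fin n → F) ≃ₗ[F] (Fin n ⊕ Fin n → F) :=
  LinearEquiv.transvection (f := c • (symp F n).flip w) (v := w) (by simp [symp_self])

lemma sympTransvection_apply (w : Fin n ⊕ Fin n → F) (c : F) (x : Fin n ⊕ Fin n → F) :
    sympTransvection w c x = x + (c * symp F n x w) • w :=
  LinearEquiv.transvection.apply _ x

lemma symp_sympTransvection (w : Fin n ⊕ Fin n → F) (c : F) (x y : Fin n ⊕ Fin n → F) :
    symp F n (sympTransvection w c x) (sympTransvection w c y) = symp F n x y := by
  simp only [sympTransvection_apply, map_add, map_smul, LinearMap.add_apply, LinearMap.smul_apply,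
    smul_eq_mul, symp_self, symp_swap w y]
  ring

lemma exists_Sp_mulVec_eq_of_symp_ne_zero {a b : Fin n ⊕ Fin n → F} (hab : symp F n a b ≠ 0) :
    ∃ g : Sp F n, Sp.mat g *ᵥ a = b := by
  refine ⟨Sp.ofLinearEquiv _ (symp_sympTransvection (b - a) (symp F n a b)⁻¹), ?_⟩
  rw [Sp.ofLinearEquiv_mulVec, sympTransvection_apply, map_sub, symp_self, sub_zero,
    inv_mul_cancel₀ hab, one_smul, add_sub_cancel]

lemma exists_Sp_mulVec_eq {u v : Fin n ⊕ Fin n → F} (hu : u ≠ 0) (hv : v ≠ 0) :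
    ∃ g : Sp F n, Sp.mat g *ᵥ u = v := by
  obtain ⟨x, hx⟩ := exists_symp_ne_zero hu
  obtain ⟨y, hy⟩ := exists_symp_ne_zero hv
  rw [symp_swap, neg_ne_zero] at hx
  -- a vector `z` with `⟨u, z⟩ ≠ 0 ≠ ⟨z, v⟩` lets two transvections carry `u` to `z` to `v`
  obtain ⟨z, huz, hzv⟩ : ∃ z, symp F n u z ≠ 0 ∧ symp F n z v ≠ 0 := by
    by_cases hxv : symp F n x v = 0
    · by_cases huy : symp F n u y = 0
      · exact ⟨x + y, by simpa [huy] using hx, by simpa [hxv] using hy⟩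
      · exact ⟨y, huy, hy⟩
    · exact ⟨x, hx, hxv⟩
  obtain ⟨g₁, hg₁⟩ := exists_Sp_mulVec_eq_of_symp_ne_zero huz
  obtain ⟨g₂, hg₂⟩ := exists_Sp_mulVec_eq_of_symp_ne_zero hzv
  exact ⟨g₂ * g₁, by rw [← hg₂, ← hg₁, mulVec_mulVec]; rfl⟩

end Sp

namespace Heis

variable {F : Type} [Field F] {ι : Type} [Fintype ι] {M : Matrix ι ι F}

def mk (v : ι → F) (z : F) : Heis F ι M := (v, z)

lemma mk_mul_mk (v u : ι → F) (z z' : F) :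
    (mk v z : Heis F ι M) * mk u z' = mk (v + u) (z + z' + 2⁻¹ * (v ⬝ᵥ (M *ᵥ u))) := rfl

lemma one_eq_mk : (1 : Heis F ι M) = mk 0 0 := rfl

lemma mk_fst_snd (h : Heis F ι M) : mk h.1 h.2 = h := rfl

end Heis

section HeisRep

variable {F : Type} [Field F] {n : ℕ} {W : Type} [AddCommGroup W] [Module ℂ W]
  {π : Representation ℂ (Heis F (Fin n ⊕ Fin n) (Jmat F n)) W} {ψ : AddChar F ℂ}

lemma map_mk_eq_smul (hcc : HasCentralChar π ψ) (v : Fin n ⊕ Fin n → F) (z : F) :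
    π (.mk v z) = ψ z • π (.mk v 0) := by
  have : (Heis.mk v z : Heis F _ (Jmat F n)) = .mk 0 z * .mk v 0 := by
    simp [Heis.mk_mul_mk]
  rw [this, map_mul, Heis.mk, hcc z, smul_mul_assoc, one_mul]

lemma map_mk_mul_map_mk (hcc : HasCentralChar π ψ) (v u : Fin n ⊕ Fin n → F) :
    π (.mk v 0) * π (.mk u 0) = ψ (2⁻¹ * symp F n v u) • π (.mk (v + u) 0) := by
  rw [← map_mul, Heis.mk_mul_mk, map_mk_eq_smul hcc, symp_apply, zero_add, zero_add]

lemma map_mk_neg_mul_map_mk (hcc : HasCentralChar π ψ) (v : Fin n ⊕ Fin n → F) :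
    π (.mk (-v) 0) * π (.mk v 0) = 1 := by
  rw [map_mk_mul_map_mk hcc, map_neg, LinearMap.neg_apply, symp_self, neg_zero, mul_zero,
    AddChar.map_zero_eq_one, one_smul, neg_add_cancel, ← Heis.one_eq_mk, map_one]

lemma map_mk_conj (hcc : HasCentralChar π ψ) (h2 : (2 : F) ≠ 0) (w v : Fin n ⊕ Fin n → F) :
    π (.mk w 0) * π (.mk v 0) * π (.mk (-w) 0) = ψ (symp F n w v) • π (.mk v 0) := by
  rw [map_mk_mul_map_mk hcc, smul_mul_assoc, map_mk_mul_map_mk hcc, smul_smul,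
    ← AddChar.map_add_eq_mul, add_neg_cancel_comm]
  congr 2
  simp only [map_add, map_neg, LinearMap.add_apply, symp_self, symp_swap v w]
  field_simp
  ring

lemma span_range_map_mk_inr_eq_top (hcc : HasCentralChar π ψ) (h2 : (2 : F) ≠ 0)
    (hirr : IsIrredRep π) {w : W} (hw : w ≠ 0) (hfix : ∀ x, π (.mk (x ⊕ᵥ 0) 0) w = w) :
    Submodule.span ℂ (Set.range fun b => π (.mk (0 ⊕ᵥ b) 0) w) = ⊤ := by
  set S := Submodule.span ℂ (Set.range fun b => π (.mk (0 ⊕ᵥ b) 0) w)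
  have hS : ∀ f : Module.End ℂ W, (∀ b, f (π (.mk (0 ⊕ᵥ b) 0) w) ∈ S) → ∀ y ∈ S, f y ∈ S :=
    fun f hf => Submodule.span_le (p := S.comap f) |>.mpr (Set.range_subset_iff.mpr hf)
  have hS_inr : ∀ a, ∀ y ∈ S, π (.mk (0 ⊕ᵥ a) 0) y ∈ S := fun a => hS _ fun b => by
    rw [← Module.End.mul_apply, map_mk_mul_map_mk hcc, symp_inr_inr, ← Sum.elim_add_add,
      add_zero]
    exact S.smul_mem _ (Submodule.subset_span ⟨a + b, rfl⟩)
  have hS_inl : ∀ x, ∀ y ∈ S, π (.mk (x ⊕ᵥ 0) 0) y ∈ S := fun x => hS _ fun b => by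
    have hfix' : π (.mk (-(x ⊕ᵥ 0)) 0) w = w := by rw [← Sum.elim_neg_neg, neg_zero, hfix]
    rw [← hfix', ← Module.End.mul_apply, ← Module.End.mul_apply, map_mk_conj hcc h2]
    exact S.smul_mem _ (Submodule.subset_span ⟨b, rfl⟩)
  have hS_inv : ∀ h, ∀ y ∈ S, π h y ∈ S := fun h y hy => by
    rw [← Heis.mk_fst_snd h, map_mk_eq_smul hcc]
    refine S.smul_mem _ ?_
    -- split `h.1` along the two Lagrangians
    have hprod := map_mk_mul_map_mk hcc (0 ⊕ᵥ (h.1 ∘ Sum.inr)) (h.1 ∘ Sum.inl ⊕ᵥ 0)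
    rw [← Sum.elim_add_add, zero_add, add_zero, Sum.elim_comp_inl_inr] at hprod
    rw [← S.smul_mem_iff (AddChar.apply_ne_zero ψ _), ← LinearMap.smul_apply, ← hprod]
    exact hS_inr _ _ (hS_inl _ _ hy)
  refine (hirr.2 S hS_inv).resolve_left fun hbot => hw ?_
  have hwS : w ∈ S := Submodule.subset_span ⟨0, by simp [← Heis.one_eq_mk]⟩
  simpa [hbot] using hwS

end HeisRep

section HeisRepFinite

variable {F : Type} [Field F] [Fintype F] {n : ℕ} {W : Type} [AddCommGroup W] [Module ℂ W]
  {π : Representation ℂ (Heis F (Fin n ⊕ Fin n) (Jmat F n)) W} {ψ : AddChar F ℂ}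

lemma sum_addChar_symp_eq_zero (hψ : ψ ≠ 1) {v : Fin n ⊕ Fin n → F} (hv : v ≠ 0) :
    ∑ w, ψ (symp F n w v) = 0 := by
  simpa only [symp_apply] using sum_addChar_dotProduct_eq_zero hψ (Jmat_mulVec_ne_zero hv)

lemma exists_forall_map_mk_inl_eq (hψ : ψ ≠ 1) (hcc : HasCentralChar π ψ) (h2 : (2 : F) ≠ 0)
    [Nontrivial W] : ∃ w : W, w ≠ 0 ∧ ∀ x, π (.mk (x ⊕ᵥ 0) 0) w = w := by
  set P : Module.End ℂ W := ∑ x, π (.mk (x ⊕ᵥ 0) 0)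
  have hP_mul : ∀ y, π (.mk (y ⊕ᵥ 0) 0) * P = P := fun y => by
    rw [Finset.mul_sum]
    refine Fintype.sum_equiv (Equiv.addLeft y) _ _ fun x => ?_
    rw [map_mk_mul_map_mk hcc, symp_inl_inl, mul_zero, AddChar.map_zero_eq_one, one_smul,
      Equiv.coe_addLeft, ← Sum.elim_add_add, add_zero]
  -- averaging the conjugates of `P` by the complementary Lagrangian gives `q^n • 1`, so `P ≠ 0`
  have hP_avg : ∑ b, π (.mk (0 ⊕ᵥ b) 0) * P * π (.mk (-((0 : Fin n → F) ⊕ᵥ b)) 0)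
      = (Fintype.card (Fin n → F) : ℂ) • 1 := by
    simp only [P, Finset.mul_sum, Finset.sum_mul, map_mk_conj hcc h2, symp_inr_inl]
    rw [Finset.sum_comm, Finset.sum_eq_single 0]
    · simp [← Heis.one_eq_mk, Finset.card_univ, ← Nat.cast_smul_eq_nsmul ℂ]
    · intro x _ hx
      rw [← Finset.sum_smul]
      simp_rw [← dotProduct_neg]
      rw [sum_addChar_dotProduct_eq_zero hψ (neg_ne_zero.mpr hx), zero_smul]
    · simp
  have hP : P ≠ 0 := by
    rintro hP
    have hne : (Fintype.card (Fin n → F) : ℂ) • (1 : Module.End ℂ W) ≠ 0 :=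
      smul_ne_zero (Nat.cast_ne_zero.mpr Fintype.card_ne_zero) one_ne_zero
    exact hne (by simpa [hP] using hP_avg.symm)
  obtain ⟨w, hw⟩ := DFunLike.ne_iff.mp hP
  exact ⟨P w, hw, fun x => by rw [← Module.End.mul_apply, hP_mul]⟩

lemma exists_span_range_eq_top (hψ : ψ ≠ 1) (hcc : HasCentralChar π ψ) (h2 : (2 : F) ≠ 0)
    (hirr : IsIrredRep π) : ∃ f : (Fin n → F) → W, Submodule.span ℂ (Set.range f) = ⊤ := by
  have := hirr.1
  obtain ⟨w, hw, hfix⟩ := exists_forall_map_mk_inl_eq hψ hcc h2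
  exact ⟨_, span_range_map_mk_inr_eq_top hcc h2 hirr hw hfix⟩

lemma Module.Finite.of_isIrredRep (hψ : ψ ≠ 1) (hcc : HasCentralChar π ψ) (h2 : (2 : F) ≠ 0)
    (hirr : IsIrredRep π) : Module.Finite ℂ W := by
  obtain ⟨f, hf⟩ := exists_span_range_eq_top hψ hcc h2 hirr
  exact .of_fg_top (hf ▸ Submodule.fg_span (Set.finite_range f))

lemma finrank_le_card_pow (hψ : ψ ≠ 1) (hcc : HasCentralChar π ψ) (h2 : (2 : F) ≠ 0)
    (hirr : IsIrredRep π) : Module.finrank ℂ W ≤ Fintype.card F ^ n := by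
  obtain ⟨f, hf⟩ := exists_span_range_eq_top hψ hcc h2 hirr
  have h := finrank_range_le_card (R := ℂ) f
  rw [Set.finrank, hf, finrank_top] at h
  simpa using h

lemma trace_map_mk_eq_zero [Module.Finite ℂ W] (hψ : ψ ≠ 1) (hcc : HasCentralChar π ψ)
    (h2 : (2 : F) ≠ 0) {v : Fin n ⊕ Fin n → F} (hv : v ≠ 0) :
    LinearMap.trace ℂ W (π (.mk v 0)) = 0 := by
  obtain ⟨w, hw⟩ : ∃ w, ψ (symp F n w v) ≠ 1 := by
    by_contra! h
    simpa [h, Fintype.card_ne_zero] using sum_addChar_symp_eq_zero hψ hv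
  have hconj := congrArg (LinearMap.trace ℂ W) (map_mk_conj hcc h2 w v)
  rw [LinearMap.trace_mul_cycle, map_mk_neg_mul_map_mk hcc, one_mul, map_smul,
    smul_eq_mul] at hconj
  have : (ψ (symp F n w v) - 1) * LinearMap.trace ℂ W (π (.mk v 0)) = 0 := by
    linear_combination -hconj
  exact (mul_eq_zero.mp this).resolve_left (sub_ne_zero.mpr hw)

lemma linearIndependent_map_mk [Module.Finite ℂ W] [Nontrivial W] (hψ : ψ ≠ 1)
    (hcc : HasCentralChar π ψ) (h2 : (2 : F) ≠ 0) :
    LinearIndependent ℂ fun v : Fin n ⊕ Fin n → F => π (.mk v 0) := by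
  refine Fintype.linearIndependent_iff.mpr fun c hc u => ?_
  -- the trace of `π (-u, 0) π (v, 0)` vanishes unless `v = u`
  have htr := congrArg (fun X => LinearMap.trace ℂ W (π (.mk (-u) 0) * X)) hc
  simp only [mul_zero, map_zero, Finset.mul_sum, mul_smul_comm, map_sum, map_smul,
    map_mk_mul_map_mk hcc] at htr
  rw [Finset.sum_eq_single u (fun v _ hvu => by
    rw [trace_map_mk_eq_zero hψ hcc h2 (by rwa [neg_add_eq_sub, sub_ne_zero]), smul_zero,
      smul_zero]) (by simp)] at htr
  simpa [symp_self, ← Heis.one_eq_mk, Module.finrank_pos.ne'] using htr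

lemma finrank_eq_card_pow (hψ : ψ ≠ 1) (hcc : HasCentralChar π ψ) (h2 : (2 : F) ≠ 0)
    (hirr : IsIrredRep π) : Module.finrank ℂ W = Fintype.card F ^ n := by
  have := hirr.1
  have := Module.Finite.of_isIrredRep hψ hcc h2 hirr
  have hle := finrank_le_card_pow hψ hcc h2 hirr
  have hge := (linearIndependent_map_mk hψ hcc h2 (π := π)).fintype_card_le_finrank
  rw [Module.finrank_linearMap, Fintype.card_fun, Fintype.card_sum, Fintype.card_fin,
    pow_add] at hge
  exact le_antisymm hle (Nat.mul_self_le_mul_self_iff.mp hge)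

noncomputable def heisBasis (hψ : ψ ≠ 1) (hcc : HasCentralChar π ψ) (h2 : (2 : F) ≠ 0)
    (hirr : IsIrredRep π) : Module.Basis (Fin n ⊕ Fin n → F) ℂ (Module.End ℂ W) :=
  have := hirr.1
  have := Module.Finite.of_isIrredRep hψ hcc h2 hirr
  basisOfLinearIndependentOfCardEqFinrank (linearIndependent_map_mk hψ hcc h2) <| by
    rw [Module.finrank_linearMap, finrank_eq_card_pow hψ hcc h2 hirr, ← pow_add,
      Fintype.card_fun, Fintype.card_sum, Fintype.card_fin]

@[simp]
lemma heisBasis_apply (hψ : ψ ≠ 1) (hcc : HasCentralChar π ψ) (h2 : (2 : F) ≠ 0)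
    (hirr : IsIrredRep π) (v : Fin n ⊕ Fin n → F) : heisBasis hψ hcc h2 hirr v = π (.mk v 0) := by
  simp [heisBasis]

variable (π) in
def heisSum : Module.End ℂ W := ∑ v, π (.mk v 0)

lemma heisSum_mul_map_mk (hcc : HasCentralChar π ψ) (u : Fin n ⊕ Fin n → F) :
    heisSum π * π (.mk u 0) = π (.mk (-u) 0) * heisSum π := by
  rw [heisSum, Finset.sum_mul, Finset.mul_sum]
  calc ∑ v, π (.mk v 0) * π (.mk u 0)
      = ∑ w, ψ (2⁻¹ * symp F n w u) • π (.mk w 0) := by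
        refine Fintype.sum_equiv (Equiv.addRight u) _ _ fun v => ?_
        simp [map_mk_mul_map_mk hcc, symp_self]
    _ = ∑ v, π (.mk (-u) 0) * π (.mk v 0) := by
        refine (Fintype.sum_equiv (Equiv.addLeft (-u)) _ _ fun v => ?_).symm
        simp [map_mk_mul_map_mk hcc, symp_self, symp_swap v u]

lemma heisSum_mul_self (hψ : ψ ≠ 1) (hcc : HasCentralChar π ψ) (h2 : (2 : F) ≠ 0) :
    heisSum π * heisSum π = (Fintype.card (Fin n ⊕ Fin n → F) : ℂ) • 1 := by
  have hrow : ∀ v, ∑ u, π (.mk v 0) * π (.mk u 0)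
      = ∑ w, ψ (symp F n v ((2 : F)⁻¹ • w)) • π (.mk w 0) := fun v => by
    refine Fintype.sum_equiv (Equiv.addLeft v) _ _ fun u => ?_
    simp [map_mk_mul_map_mk hcc, symp_self]
  simp_rw [heisSum, Finset.sum_mul_sum, hrow]
  rw [Finset.sum_comm]
  simp_rw [← Finset.sum_smul]
  rw [Finset.sum_eq_single 0 (fun w _ hw => by
    rw [sum_addChar_symp_eq_zero hψ (smul_ne_zero (inv_ne_zero h2) hw), zero_smul]) (by simp)]
  simp [← Heis.one_eq_mk, Finset.card_univ, ← Nat.cast_smul_eq_nsmul ℂ]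

lemma trace_heisSum [Module.Finite ℂ W] (hψ : ψ ≠ 1) (hcc : HasCentralChar π ψ)
    (h2 : (2 : F) ≠ 0) : LinearMap.trace ℂ W (heisSum π) = Module.finrank ℂ W := by
  rw [heisSum, map_sum, Finset.sum_eq_single 0 (fun v _ hv => trace_map_mk_eq_zero hψ hcc h2 hv)
    (by simp), ← Heis.one_eq_mk, map_one, LinearMap.trace_one]

end HeisRepFinite

section Involution

variable {K W : Type} [Field K] [AddCommGroup W] [Module K W]

lemma isCompl_eigenspace_one_neg_one (h2 : (2 : K) ≠ 0) {T : Module.End K W} (hT : T * T = 1) :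
    IsCompl (T.eigenspace 1) (T.eigenspace (-1)) := by
  have hTT : ∀ x, T (T x) = x := fun x => by rw [← Module.End.mul_apply, hT, Module.End.one_apply]
  refine ⟨Submodule.disjoint_def.mpr fun x h₁ h₂ => ?_, codisjoint_iff.mpr <| eq_top_iff.mpr
    fun x _ => Submodule.mem_sup.mpr ⟨(2 : K)⁻¹ • (x + T x), ?_, (2 : K)⁻¹ • (x - T x), ?_, ?_⟩⟩
  · rw [Module.End.mem_eigenspace_iff] at h₁ h₂
    have : (2 : K) • x = 0 := by rw [two_smul]; nth_rw 1 [← one_smul K x, ← h₁, h₂]; simp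
    exact (smul_eq_zero.mp this).resolve_left h2
  · simp [hTT, add_comm]
  · rw [Module.End.mem_eigenspace_iff, map_smul, map_sub, hTT]
    module
  · rw [← smul_add, add_add_sub_cancel, ← two_smul K, smul_smul, inv_mul_cancel₀ h2, one_smul]

lemma trace_eq_finrank_eigenspace_sub [FiniteDimensional K W] (h2 : (2 : K) ≠ 0)
    {T : Module.End K W} (hT : T * T = 1) :
    LinearMap.trace K W T
      = Module.finrank K (T.eigenspace 1) - Module.finrank K (T.eigenspace (-1)) := by
  have hTT : ∀ x, T (T x) = x := fun x => by rw [← Module.End.mul_apply, hT, Module.End.one_apply]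
  have hP : LinearMap.IsProj (T.eigenspace 1) ((2 : K)⁻¹ • (1 + T)) :=
    ⟨fun x => by simp [hTT, add_comm],
      fun x hx => by
        rw [Module.End.mem_eigenspace_iff, one_smul] at hx
        simp only [LinearMap.smul_apply, LinearMap.add_apply, Module.End.one_apply, hx]
        rw [← two_smul K, smul_smul, inv_mul_cancel₀ h2, one_smul]⟩
  have htr := hP.trace
  have hdim := Submodule.finrank_add_eq_of_isCompl (isCompl_eigenspace_one_neg_one h2 hT)
  rw [map_smul, map_add, LinearMap.trace_one, smul_eq_mul, ← hdim, Nat.cast_add] at htr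
  field_simp at htr
  linear_combination htr

end Involution

lemma isIrreducibleSubrep_of_forall_commute {G W : Type} [Group G] [Finite G] [AddCommGroup W]
    [Module ℂ W] {ρ : Representation ℂ G W} {p : Submodule ℂ W} (hp : InvariantUnder ρ p)
    (hp0 : p ≠ ⊥)
    (hscalar : ∀ X : Module.End ℂ W, (∀ g, Commute (ρ g) X) → ∃ c : ℂ, ∀ w ∈ p, X w = c • w) :
    IsIrreducibleSubrep ρ p := by
  refine ⟨hp, hp0, fun s hsp hs => or_iff_not_imp_left.mpr fun hs0 => ?_⟩
  have : NeZero (Nat.card G : ℂ) := ⟨Nat.cast_ne_zero.mpr Nat.card_pos.ne'⟩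
  obtain ⟨t, hst⟩ := exists_isCompl (⟨s, fun g _ hv => hs g _ hv⟩ : Subrepresentation ρ)
  have hst' : IsCompl s t.toSubmodule :=
    ⟨disjoint_iff.mpr (congrArg Subrepresentation.toSubmodule (disjoint_iff.mp hst.disjoint)),
      codisjoint_iff.mpr
        (congrArg Subrepresentation.toSubmodule (codisjoint_iff.mp hst.codisjoint))⟩
  -- the projection onto `s` along the invariant complement `t` is an intertwiner
  set X := s.projection t.toSubmodule hst'
  have hX : ∀ g, Commute (ρ g) X := fun g =>
    (LinearMap.IsIdempotentElem.commute_iff (Submodule.isIdempotentElem_projection hst') |>.mpr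
      ⟨by rw [Submodule.range_projection]; exact hs g,
        by rw [Submodule.ker_projection]; exact fun w hw => t.apply_mem_toSubmodule g hw⟩).symm
  obtain ⟨c, hc⟩ := hscalar X hX
  obtain ⟨a, has, ha0⟩ := Submodule.ne_bot_iff s |>.mp hs0
  have hc1 : c = 1 := by
    have hXa := hc a (hsp has)
    rw [Submodule.projection_apply_of_mem_left hst' has] at hXa
    have : (c - 1) • a = 0 := by rw [sub_smul, one_smul, ← hXa, sub_self]
    exact sub_eq_zero.mp ((smul_eq_zero.mp this).resolve_right ha0)
  refine le_antisymm hsp fun w hw => ?_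
  have := hc w hw
  rw [hc1, one_smul] at this
  exact this ▸ Submodule.projection_apply_mem hst' w

lemma negI_mul_self (F : Type) [Field F] (n : ℕ) : negI F n * negI F n = 1 :=
  Subtype.ext (by simp [negI])

lemma commute_negI {F : Type} [Field F] {n : ℕ} (g : Sp F n) : Commute g (negI F n) :=
  Subtype.ext (by simp [negI])

lemma Sp.mat_negI (F : Type) [Field F] (n : ℕ) : Sp.mat (negI F n) = -1 := by
  simp [negI]

section OscillatorBasic

variable {F : Type} [Field F] {n : ℕ} {W : Type} [AddCommGroup W] [Module ℂ W]
  {π : Representation ℂ (Heis F (Fin n ⊕ Fin n) (Jmat F n)) W} {ω : Sp F n →* (W →ₗ[ℂ] W)ˣ}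

lemma toRep_mul_map_mk_mul_toRep_inv (hω : IsOscillator π ω) (g : Sp F n)
    (v : Fin n ⊕ Fin n → F) :
    toRep ω g * π (.mk v 0) * toRep ω g⁻¹ = π (.mk (Sp.mat g *ᵥ v) 0) := by
  rw [toRep, MonoidHom.comp_apply, MonoidHom.comp_apply, map_inv]
  exact hω g (.mk v 0)

lemma toRep_negI_mul_self : toRep ω (negI F n) * toRep ω (negI F n) = 1 := by
  rw [← map_mul, negI_mul_self, map_one]

lemma toRep_negI_mul_map_mk (hω : IsOscillator π ω) (v : Fin n ⊕ Fin n → F) :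
    toRep ω (negI F n) * π (.mk v 0) = π (.mk (-v) 0) * toRep ω (negI F n) := by
  have h := toRep_mul_map_mk_mul_toRep_inv hω (negI F n) v
  rw [inv_eq_of_mul_eq_one_right (negI_mul_self F n), Sp.mat_negI, neg_mulVec, one_mulVec] at h
  rw [← h, mul_assoc _ _ (toRep ω (negI F n)), toRep_negI_mul_self, mul_one]

end OscillatorBasic

section Oscillator

variable {F : Type} [Field F] [Fintype F] {n : ℕ} {W : Type} [AddCommGroup W] [Module ℂ W]
  {π : Representation ℂ (Heis F (Fin n ⊕ Fin n) (Jmat F n)) W} {ψ : AddChar F ℂ}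
  {ω : Sp F n →* (W →ₗ[ℂ] W)ˣ}

lemma exists_eq_smul_one_add_smul_heisSum (hψ : ψ ≠ 1) (hcc : HasCentralChar π ψ)
    (h2 : (2 : F) ≠ 0) (hirr : IsIrredRep π) (hω : IsOscillator π ω) {X : Module.End ℂ W}
    (hX : ∀ g, Commute (toRep ω g) X) : ∃ a b : ℂ, X = a • 1 + b • heisSum π := by
  set B := heisBasis hψ hcc h2 hirr
  set c := B.repr X
  have hX_sum : X = ∑ v, c v • π (.mk v 0) := by simpa [B] using (B.sum_repr X).symm
  -- conjugation by `ω g` permutes the basis `π (v, 0)` as `g` permutes `V`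
  have hc : ∀ g v, c (Sp.mat g *ᵥ v) = c v := fun g v => by
    let e := (Matrix.GeneralLinearGroup.toLin (g : GL (Fin n ⊕ Fin n) F)).toLinearEquiv.toEquiv
    have hconj : X = ∑ w, c (e.symm w) • B w := by
      calc X = toRep ω g * X * toRep ω g⁻¹ := by
            rw [(hX g).eq, mul_assoc, ← map_mul, mul_inv_cancel, map_one, mul_one]
        _ = ∑ w, c (e.symm w) • B w := by
            rw [hX_sum, Finset.mul_sum, Finset.sum_mul]
            refine Fintype.sum_equiv e _ _ fun v => ?_
            rw [mul_smul_comm, smul_mul_assoc, toRep_mul_map_mk_mul_toRep_inv hω, heisBasis_apply,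
              e.symm_apply_apply]
            rfl
    have := congrFun (B.repr_sum_self fun w => c (e.symm w)) (e v)
    rwa [← hconj, e.symm_apply_apply] at this
  obtain ⟨b, hb⟩ : ∃ b, ∀ v ≠ 0, c v = b := by
    by_cases h : ∃ v₀ : Fin n ⊕ Fin n → F, v₀ ≠ 0
    · obtain ⟨v₀, hv₀⟩ := h
      refine ⟨c v₀, fun v hv => ?_⟩
      obtain ⟨g, rfl⟩ := exists_Sp_mulVec_eq hv₀ hv
      exact hc g v₀
    · exact ⟨0, fun v hv => absurd ⟨v, hv⟩ h⟩
  refine ⟨c 0 - b, b, ?_⟩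
  calc X = ∑ v, ((c v - b) • π (.mk v 0) + b • π (.mk v 0)) := by
        simp_rw [sub_smul, sub_add_cancel]; exact hX_sum
    _ = (c 0 - b) • 1 + b • heisSum π := by
        rw [Finset.sum_add_distrib, heisSum, Finset.smul_sum,
          Finset.sum_eq_single 0 (fun v _ hv => by rw [hb v hv, sub_self, zero_smul]) (by simp),
          ← Heis.one_eq_mk, map_one]

lemma exists_toRep_negI_eq_smul_heisSum (hψ : ψ ≠ 1) (hcc : HasCentralChar π ψ)
    (h2 : (2 : F) ≠ 0) (hirr : IsIrredRep π) (hω : IsOscillator π ω) (hn : 0 < n) :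
    ∃ b : ℂ, toRep ω (negI F n) = b • heisSum π := by
  have := hirr.1
  have := Module.Finite.of_isIrredRep hψ hcc h2 hirr
  obtain ⟨a, b, hab⟩ := exists_eq_smul_one_add_smul_heisSum hψ hcc h2 hirr hω
    fun g => ((commute_negI g).map (toRep ω))
  refine ⟨b, ?_⟩
  have : Nonempty (Fin n) := ⟨⟨0, hn⟩⟩
  obtain ⟨u, hu⟩ := exists_ne (0 : Fin n ⊕ Fin n → F)
  -- `ω(-I)` and `heisSum π` both carry `π (u, 0)` to `π (-u, 0)` under conjugation; `1` does not
  have h := toRep_negI_mul_map_mk hω u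
  rw [hab, add_mul, mul_add, smul_mul_assoc, smul_mul_assoc, mul_smul_comm, mul_smul_comm,
    heisSum_mul_map_mk hcc, one_mul, mul_one, add_left_inj] at h
  have hu' : u ≠ -u := fun huu => by
    have : (2 : F) • u = 0 := by rw [two_smul]; nth_rw 1 [huu]; exact neg_add_cancel u
    exact hu ((smul_eq_zero.mp this).resolve_left h2)
  have ha : a = 0 := by
    by_contra ha
    exact (linearIndependent_map_mk hψ hcc h2).injective.ne hu' (smul_right_injective _ ha h)
  rw [hab, ha, zero_smul, zero_add]

lemma trace_toRep_negI_sq (hψ : ψ ≠ 1) (hcc : HasCentralChar π ψ) (h2 : (2 : F) ≠ 0)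
    (hirr : IsIrredRep π) (hω : IsOscillator π ω) (hn : 0 < n) :
    LinearMap.trace ℂ W (toRep ω (negI F n)) ^ 2 = 1 := by
  have := hirr.1
  have := Module.Finite.of_isIrredRep hψ hcc h2 hirr
  obtain ⟨b, hb⟩ := exists_toRep_negI_eq_smul_heisSum hψ hcc h2 hirr hω hn
  have hsq := toRep_negI_mul_self (ω := ω)
  rw [hb, smul_mul_smul_comm, heisSum_mul_self hψ hcc h2, smul_smul] at hsq
  have hcard : b * b * (Fintype.card (Fin n ⊕ Fin n → F) : ℂ) = 1 :=
    smul_left_injective ℂ one_ne_zero (hsq.trans (one_smul ℂ 1).symm)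
  rw [hb, map_smul, trace_heisSum hψ hcc h2, finrank_eq_card_pow hψ hcc h2 hirr, smul_eq_mul,
    ← hcard]
  simp only [Fintype.card_fun, Fintype.card_sum, Fintype.card_fin, pow_add, Nat.cast_mul,
    Nat.cast_pow]
  ring

lemma finrank_eigenspace_toRep_negI_eq_add_one_or (hψ : ψ ≠ 1) (hcc : HasCentralChar π ψ)
    (h2 : (2 : F) ≠ 0) (hirr : IsIrredRep π) (hω : IsOscillator π ω) (hn : 0 < n) :
    Module.finrank ℂ (Module.End.eigenspace (toRep ω (negI F n)) 1)
        = Module.finrank ℂ (Module.End.eigenspace (toRep ω (negI F n)) (-1)) + 1 ∨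
      Module.finrank ℂ (Module.End.eigenspace (toRep ω (negI F n)) (-1))
        = Module.finrank ℂ (Module.End.eigenspace (toRep ω (negI F n)) 1) + 1 := by
  have := Module.Finite.of_isIrredRep hψ hcc h2 hirr
  have htr := trace_toRep_negI_sq hψ hcc h2 hirr hω hn
  rw [trace_eq_finrank_eigenspace_sub two_ne_zero toRep_negI_mul_self, sq] at htr
  have := mul_self_eq_one_iff.mp (by exact_mod_cast htr :
    ((Module.finrank ℂ (Module.End.eigenspace (toRep ω (negI F n)) 1) : ℤ) -
      Module.finrank ℂ (Module.End.eigenspace (toRep ω (negI F n)) (-1))) *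
    ((Module.finrank ℂ (Module.End.eigenspace (toRep ω (negI F n)) 1) : ℤ) -
      Module.finrank ℂ (Module.End.eigenspace (toRep ω (negI F n)) (-1))) = 1)
  omega

lemma isIrreducibleSubrep_eigenspace_toRep_negI (hψ : ψ ≠ 1) (hcc : HasCentralChar π ψ)
    (h2 : (2 : F) ≠ 0) (hirr : IsIrredRep π) (hω : IsOscillator π ω) (hn : 0 < n) {μ : ℂ}
    (hμ : Module.End.eigenspace (toRep ω (negI F n)) μ ≠ ⊥) :
    IsIrreducibleSubrep (toRep ω) (Module.End.eigenspace (toRep ω (negI F n)) μ) := by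
  obtain ⟨b, hb⟩ := exists_toRep_negI_eq_smul_heisSum hψ hcc h2 hirr hω hn
  have hb0 : b ≠ 0 := by
    rintro rfl
    have := hirr.1
    simpa [hb] using toRep_negI_mul_self (ω := ω)
  refine isIrreducibleSubrep_of_forall_commute
    (fun g => Module.End.mapsTo_genEigenspace_of_comm ((commute_negI g).map (toRep ω)).symm μ 1)
    hμ fun X hX => ?_
  -- the commutant is spanned by `1` and `heisSum π = b⁻¹ • ω(-I)`, which is scalar on eigenspaces
  obtain ⟨a, c, rfl⟩ := exists_eq_smul_one_add_smul_heisSum hψ hcc h2 hirr hω hX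
  refine ⟨a + c * b⁻¹ * μ, fun w hw => ?_⟩
  rw [Module.End.mem_eigenspace_iff, hb, LinearMap.smul_apply] at hw
  rw [LinearMap.add_apply, LinearMap.smul_apply, LinearMap.smul_apply, Module.End.one_apply,
    ← inv_smul_smul₀ hb0 (heisSum π w), hw]
  module

end Oscillator

/-- The oscillator representation decomposes as the direct sum of the
`(+1)`- and `(-1)`-eigenspaces of `ω(-I)`, each of which is an irreducible
subrepresentation; their dimensions are `(q^n + 1)/2` and `(q^n - 1)/2` in some order. -/
theorem oscillator_decomposition
    (F : Type) [Field F] [Fintype F] (hodd : Odd (Fintype.card F))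
    (n : ℕ) (hn : 0 < n)
    (W : Type) [AddCommGroup W] [Module ℂ W]
    (π : Representation ℂ (Heis F (Fin n ⊕ Fin n) (Jmat F n)) W)
    (hirr : IsIrredRep π)
    (ψ : AddChar F ℂ) (hψ : ψ ≠ 1) (hcc : HasCentralChar π ψ)
    (ω : ↥(Sp F n) →* (W →ₗ[ℂ] W)ˣ) (hω : IsOscillator π ω) :
    IsCompl (Module.End.eigenspace ((toRep ω) (negI F n)) 1)
        (Module.End.eigenspace ((toRep ω) (negI F n)) (-1)) ∧
    IsIrreducibleSubrep (toRep ω) (Module.End.eigenspace ((toRep ω) (negI F n)) 1) ∧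
    IsIrreducibleSubrep (toRep ω) (Module.End.eigenspace ((toRep ω) (negI F n)) (-1)) ∧
    ((Module.finrank ℂ ↥(Module.End.eigenspace ((toRep ω) (negI F n)) 1)
          = (Fintype.card F ^ n + 1) / 2 ∧
      Module.finrank ℂ ↥(Module.End.eigenspace ((toRep ω) (negI F n)) (-1))
          = (Fintype.card F ^ n - 1) / 2) ∨
     (Module.finrank ℂ ↥(Module.End.eigenspace ((toRep ω) (negI F n)) 1)
          = (Fintype.card F ^ n - 1) / 2 ∧
      Module.finrank ℂ ↥(Module.End.eigenspace ((toRep ω) (negI F n)) (-1))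
          = (Fintype.card F ^ n + 1) / 2)) := by
  have h2 := two_ne_zero_of_odd_card hodd
  have := Module.Finite.of_isIrredRep hψ hcc h2 hirr
  have hcompl := isCompl_eigenspace_one_neg_one two_ne_zero (toRep_negI_mul_self (ω := ω))
  have hsum := Submodule.finrank_add_eq_of_isCompl hcompl
  rw [finrank_eq_card_pow hψ hcc h2 hirr] at hsum
  have hdiff := finrank_eigenspace_toRep_negI_eq_add_one_or hψ hcc h2 hirr hω hn
  have hq : 2 ≤ Fintype.card F ^ n := Fintype.one_lt_card.trans_le (Nat.le_self_pow hn.ne' _)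
  refine ⟨hcompl,
    isIrreducibleSubrep_eigenspace_toRep_negI hψ hcc h2 hirr hω hn
      (Submodule.finrank_eq_zero.not.mp (by omega)),
    isIrreducibleSubrep_eigenspace_toRep_negI hψ hcc h2 hirr hω hn
      (Submodule.finrank_eq_zero.not.mp (by omega)), by omega⟩
end

section
/- Let T : F_q^n → U be a surjective linear map, let Ω = {T' ∈ Hom(F_q^n, U) : β_{T'} = β_T}, and let W be the complex vector space of functions f : Ω → ℂ. Let A ⊆ End(W) be the subalgebra spanned by the operators L_r (r ∈ O_β) given by (L_r f)(T') = f(r^{−1} ∘ T'), and let A' ⊆ End(W) be the subalgebra spanned by the operators R_g (g ∈ G_{β_T}) given by (R_g f)(T') = f(T' ∘ g), where G_{β_T} = {g ∈ GL_n(F_q) : β_T(gx, gx') = β_T(x, x') for all x, x'}. Then A and A' are each the full commutant of the other in End(W). -/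
/-!
The fiber `Ω` carries commuting actions of `O_β` (by `T' ↦ r * T'`) and of `G_{β_T}` (by
`T' ↦ T' * g`), and both are transitive. Indeed, if `σ` is a right inverse of `T` and `T' ∈ Ω`,
then `r = T' * σ` is an isometry of `β` with `r * T = T'`, and `g = 1 + σ * (r - 1) * T` is an
invertible matrix with `T * g = r * T`, which then preserves `β_T`.

For two commuting transitive actions on a finite set `X`, an operator `Φ` commuting with the first
action is determined by `f = Φ δ_{x₀}`, because the `δ_x` form one orbit. Choosing `k_y` in the
second group with `k_y • y = x₀`, the operator `∑ y, f y • (φ ↦ φ ∘ (k_y • ·))` commutes with the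
first action and also sends `δ_{x₀}` to `f`, so `Φ` equals it.
-/

open Matrix
open scoped Kronecker

section DoubleCommutant

variable (F : Type) [Field F] (n k : ℕ)
variable (G : Matrix (Fin k) (Fin k) F) (T : Matrix (Fin k) (Fin n) F)

/-- The fiber `Ω = {T' : β_{T'} = β_T}`. -/
def OmegaFiber : Type := {T' : Matrix (Fin k) (Fin n) F // betaT G T' = betaT G T}

lemma betaT_mul_left (r : (Matrix (Fin k) (Fin k) F)ˣ)
    (hr : r ∈ formStab F (Fin k) (fun u v => u ⬝ᵥ (G *ᵥ v)))
    (S : Matrix (Fin k) (Fin n) F) :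
    betaT G ((r : Matrix (Fin k) (Fin k) F) * S) = betaT G S := by
  funext x
  funext x'
  show (((r : Matrix (Fin k) (Fin k) F) * S) *ᵥ x) ⬝ᵥ
      (G *ᵥ (((r : Matrix (Fin k) (Fin k) F) * S) *ᵥ x')) = _
  rw [← Matrix.mulVec_mulVec, ← Matrix.mulVec_mulVec]
  exact hr (S *ᵥ x) (S *ᵥ x')

lemma betaT_mul_right (g : (Matrix (Fin n) (Fin n) F)ˣ)
    (hg : g ∈ formStab F (Fin n) (betaT G T))
    (T' : Matrix (Fin k) (Fin n) F) (hT' : betaT G T' = betaT G T) :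
    betaT G (T' * (g : Matrix (Fin n) (Fin n) F)) = betaT G T := by
  funext x
  funext x'
  show ((T' * (g : Matrix (Fin n) (Fin n) F)) *ᵥ x) ⬝ᵥ
      (G *ᵥ ((T' * (g : Matrix (Fin n) (Fin n) F)) *ᵥ x')) = betaT G T x x'
  rw [← Matrix.mulVec_mulVec, ← Matrix.mulVec_mulVec]
  have h1 : betaT G T' ((g : Matrix (Fin n) (Fin n) F) *ᵥ x)
      ((g : Matrix (Fin n) (Fin n) F) *ᵥ x') = betaT G T x x' := by
    rw [hT']
    exact hg x x'
  exact h1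

/-- The operator `L_r`, `(L_r f)(T') = f(r⁻¹ ∘ T')`, for `r ∈ O_β`. -/
def opL (r : ↥(formStab F (Fin k) (fun u v => u ⬝ᵥ (G *ᵥ v)))) :
    (OmegaFiber F n k G T → ℂ) →ₗ[ℂ] (OmegaFiber F n k G T → ℂ) where
  toFun f := fun T' => f ⟨((↑(r⁻¹) : (Matrix (Fin k) (Fin k) F)ˣ) : Matrix (Fin k) (Fin k) F) * T'.1,
    by rw [betaT_mul_left F n k G (↑(r⁻¹)) (r⁻¹).2 T'.1, T'.2]⟩
  map_add' f g := rfl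
  map_smul' c f := rfl

/-- The operator `R_g`, `(R_g f)(T') = f(T' ∘ g)`, for `g ∈ G_{β_T}`. -/
def opR (g : ↥(formStab F (Fin n) (betaT G T))) :
    (OmegaFiber F n k G T → ℂ) →ₗ[ℂ] (OmegaFiber F n k G T → ℂ) where
  toFun f := fun T' => f ⟨T'.1 * ((↑g : (Matrix (Fin n) (Fin n) F)ˣ) : Matrix (Fin n) (Fin n) F),
    betaT_mul_right F n k G T (↑g) g.2 T'.1 T'.2⟩
  map_add' f g := rfl
  map_smul' c f := rfl

end DoubleCommutant

open LinearMap MulAction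

lemma Subalgebra.centralizer_coe_adjoin {R A : Type*} [CommSemiring R] [Semiring A] [Algebra R A]
    (s : Set A) : centralizer R (Algebra.adjoin R s : Set A) = centralizer R s :=
  le_antisymm (centralizer_le R _ _ Algebra.subset_adjoin) fun _ hx =>
    (mem_centralizer_iff R).2 fun _ hg =>
      ((mem_centralizer_iff R).1 (Algebra.adjoin_le_centralizer_centralizer R s hg) _ hx).symm

section PermAlgebra

variable (R M X : Type*) [CommSemiring R] [SMul M X]

/-- For the two actions on the fiber `Ω` these are the algebras `A` and `A'`. -/
abbrev permAlgebra : Subalgebra R (Module.End R (X → R)) :=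
  Algebra.adjoin R (Set.range fun m : M => funLeft R R (m • · : X → X))

lemma funLeft_smul_mem_permAlgebra (m : M) : funLeft R R (m • · : X → X) ∈ permAlgebra R M X :=
  Algebra.subset_adjoin ⟨m, rfl⟩

variable {R M X} {H K : Type*} [Group H] [Group K] [MulAction H X] [MulAction K X]

lemma funLeft_smul_single [DecidableEq X] (h : H) (x : X) :
    funLeft R R (h • · : X → X) (Pi.single (h • x) 1) = Pi.single x 1 := by
  funext z
  simp only [funLeft_apply, Pi.single_apply, smul_left_cancel_iff]

lemma funLeft_smul_commute [SMulCommClass H K X] (h : H) (k : K) :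
    Commute (funLeft R R (h • · : X → X)) (funLeft R R (k • · : X → X)) := by
  ext f x
  simp only [Module.End.mul_apply, funLeft_apply, smul_comm]

variable (R) in
lemma permAlgebra_le_centralizer [SMulCommClass H K X] :
    permAlgebra R K X ≤ Subalgebra.centralizer R (permAlgebra R H X : Set _) := by
  rw [Subalgebra.centralizer_coe_adjoin]
  refine Algebra.adjoin_le ?_
  rintro _ ⟨k, rfl⟩
  rw [SetLike.mem_coe, Subalgebra.mem_centralizer_iff]
  rintro _ ⟨h, rfl⟩
  exact funLeft_smul_commute h k

lemma eq_of_commute_funLeft_of_apply_single_eq [Finite X] [IsPretransitive H X] [DecidableEq X]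
    {Φ Ψ : Module.End R (X → R)} (hΦ : ∀ h : H, Commute (funLeft R R (h • · : X → X)) Φ)
    (hΨ : ∀ h : H, Commute (funLeft R R (h • · : X → X)) Ψ) (x₀ : X)
    (heq : Φ (Pi.single x₀ 1) = Ψ (Pi.single x₀ 1)) : Φ = Ψ := by
  refine (Pi.basisFun R X).ext fun x => ?_
  obtain ⟨h, rfl⟩ := exists_smul_eq H x x₀
  rw [Pi.basisFun_apply, ← funLeft_smul_single h x]
  calc Φ (funLeft R R (h • ·) (Pi.single (h • x) 1))
      = funLeft R R (h • ·) (Φ (Pi.single (h • x) 1)) := (LinearMap.congr_fun (hΦ h).eq _).symm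
    _ = funLeft R R (h • ·) (Ψ (Pi.single (h • x) 1)) := by rw [heq]
    _ = Ψ (funLeft R R (h • ·) (Pi.single (h • x) 1)) := LinearMap.congr_fun (hΨ h).eq _

lemma sum_smul_funLeft_apply_single [Fintype X] [DecidableEq X] (f : X → R) (k : X → K)
    {x₀ : X} (hk : ∀ y, k y • y = x₀) :
    (∑ y, f y • funLeft R R (k y • · : X → X)) (Pi.single x₀ 1) = f := by
  funext z
  have hsingle (y : X) : (Pi.single x₀ 1 : X → R) (k y • z) = if z = y then 1 else 0 := by
    simp only [Pi.single_apply, ← hk y, smul_left_cancel_iff]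
  simp only [LinearMap.sum_apply, LinearMap.smul_apply, Finset.sum_apply, Pi.smul_apply,
    funLeft_apply, hsingle, smul_eq_mul, mul_ite, mul_one, mul_zero, Finset.sum_ite_eq,
    Finset.mem_univ, if_true]

theorem centralizer_permAlgebra [SMulCommClass H K X] [IsPretransitive H X] [IsPretransitive K X]
    [Finite X] :
    Subalgebra.centralizer R (permAlgebra R H X : Set _) = permAlgebra R K X := by
  classical
  refine le_antisymm (fun Φ hΦ => ?_) (permAlgebra_le_centralizer R)
  rcases isEmpty_or_nonempty X with _ | ⟨⟨x₀⟩⟩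
  · exact Subsingleton.elim (1 : Module.End R (X → R)) Φ ▸ Subalgebra.one_mem _
  have := Fintype.ofFinite X
  choose k hk using fun y : X => exists_smul_eq K y x₀
  have hΨ : ∑ y, Φ (Pi.single x₀ 1) y • funLeft R R (k y • · : X → X) ∈ permAlgebra R K X :=
    Subalgebra.sum_mem _ fun y _ =>
      Subalgebra.smul_mem _ (funLeft_smul_mem_permAlgebra R K X (k y)) _
  have hcomm : ∀ Ψ ∈ Subalgebra.centralizer R (permAlgebra R H X : Set _), ∀ h : H,
      Commute (funLeft R R (h • · : X → X)) Ψ := fun Ψ hΨ h =>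
    (Subalgebra.mem_centralizer_iff R).1 hΨ _ (funLeft_smul_mem_permAlgebra R H X h)
  rwa [eq_of_commute_funLeft_of_apply_single_eq (hcomm Φ hΦ)
    (hcomm _ (permAlgebra_le_centralizer R hΨ)) x₀ (sum_smul_funLeft_apply_single _ k hk).symm]

end PermAlgebra

namespace Matrix

variable {R : Type*} [CommRing R] {m n : Type*} [Fintype m] [Fintype n]

lemma mulVec_dotProduct_mulVec_mulVec (A : Matrix m n R) (M : Matrix m m R) (x y : n → R) :
    (A *ᵥ x) ⬝ᵥ (M *ᵥ (A *ᵥ y)) = x ⬝ᵥ ((Aᵀ * M * A) *ᵥ y) := by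
  simp only [dotProduct_mulVec, vecMul_mulVec, vecMul_transpose, ← mulVec_mulVec]

lemma ext_of_dotProduct_mulVec [DecidableEq n] {A B : Matrix n n R}
    (h : ∀ x y, x ⬝ᵥ (A *ᵥ y) = x ⬝ᵥ (B *ᵥ y)) : A = B :=
  toBilin'.injective <| LinearMap.ext₂ fun x y => by simp only [toBilin'_apply', h]

variable [DecidableEq m] [DecidableEq n]

lemma one_add_mul_mul_mul_one_add {T : Matrix m n R} {σ : Matrix n m R} (hσ : T * σ = 1)
    (a b : Matrix m m R) :
    (1 + σ * a * T) * (1 + σ * b * T) = 1 + σ * (a + b + a * b) * T := by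
  have hcancel : T * (σ * (b * T)) = b * T := by rw [← Matrix.mul_assoc, hσ, Matrix.one_mul]
  simp only [Matrix.mul_add, Matrix.add_mul, Matrix.mul_one, Matrix.one_mul, Matrix.mul_assoc,
    hcancel]
  abel

lemma exists_mul_eq_unit_mul {T : Matrix m n R} {σ : Matrix n m R} (hσ : T * σ = 1)
    (r : (Matrix m m R)ˣ) :
    ∃ g : (Matrix n n R)ˣ, T * (g : Matrix n n R) = (r : Matrix m m R) * T := by
  have hinv (a b : Matrix m m R) (hab : a * b = 1) :
      (1 + σ * (a - 1) * T) * (1 + σ * (b - 1) * T) = 1 := by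
    have hzero : a - 1 + (b - 1) + (a - 1) * (b - 1) = 0 := by
      simp only [sub_mul, mul_sub, mul_one, one_mul, hab]
      abel
    rw [one_add_mul_mul_mul_one_add hσ, hzero, Matrix.mul_zero, Matrix.zero_mul, add_zero]
  refine ⟨⟨_, _, hinv _ _ r.mul_inv, hinv _ _ r.inv_mul⟩, ?_⟩
  change T * (1 + σ * ((r : Matrix m m R) - 1) * T) = (r : Matrix m m R) * T
  rw [Matrix.mul_add, Matrix.mul_one, ← Matrix.mul_assoc, ← Matrix.mul_assoc, hσ,
    Matrix.one_mul, Matrix.sub_mul, Matrix.one_mul]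
  abel

end Matrix

namespace Matrix

variable {F : Type} [Field F] {ι κ : Type} [Fintype ι] [DecidableEq ι] [Fintype κ]

lemma mem_formStab_iff {M : Matrix ι ι F} {g : (Matrix ι ι F)ˣ} :
    g ∈ formStab F ι (fun u v => u ⬝ᵥ (M *ᵥ v)) ↔ (g : Matrix ι ι F)ᵀ * M * g = M := by
  change (∀ x y, _ = _) ↔ _
  simp only [mulVec_dotProduct_mulVec_mulVec]
  exact ⟨ext_of_dotProduct_mulVec, fun h x y => by rw [h]⟩

lemma exists_mem_formStab_mul_eq {G : Matrix ι ι F} (hG : IsUnit G) {T T' : Matrix ι κ F}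
    {σ : Matrix κ ι F} (hσ : T * σ = 1) (h : T'ᵀ * G * T' = Tᵀ * G * T) :
    ∃ r ∈ formStab F ι (fun u v => u ⬝ᵥ (G *ᵥ v)), (r : Matrix ι ι F) * T = T' := by
  have hGdet : IsUnit G.det := (isUnit_iff_isUnit_det G).1 hG
  set r := T' * σ
  have hr : rᵀ * G * r = G := calc
    rᵀ * G * r = σᵀ * (T'ᵀ * G * T') * σ := by simp only [r, transpose_mul, Matrix.mul_assoc]
    _ = (T * σ)ᵀ * G * (T * σ) := by rw [h]; simp only [transpose_mul, Matrix.mul_assoc]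
    _ = G := by rw [hσ, transpose_one, Matrix.one_mul, Matrix.mul_one]
  have hrT : rᵀ * G * T' = G * T := calc
    rᵀ * G * T' = σᵀ * (T'ᵀ * G * T') := by simp only [r, transpose_mul, Matrix.mul_assoc]
    _ = (T * σ)ᵀ * G * T := by rw [h]; simp only [transpose_mul, Matrix.mul_assoc]
    _ = G * T := by rw [hσ, transpose_one, Matrix.one_mul]
  have hleft : G⁻¹ * rᵀ * G * r = 1 := by
    rw [Matrix.mul_assoc G⁻¹, Matrix.mul_assoc G⁻¹, hr, nonsing_inv_mul _ hGdet]
  have hright : r * (G⁻¹ * rᵀ * G) = 1 := mul_eq_one_comm.1 hleft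
  refine ⟨⟨r, G⁻¹ * rᵀ * G, hright, hleft⟩, mem_formStab_iff.2 hr, ?_⟩
  calc r * T = r * (G⁻¹ * (rᵀ * G * T')) := by
        rw [hrT, ← Matrix.mul_assoc G⁻¹, nonsing_inv_mul _ hGdet, Matrix.one_mul]
    _ = r * (G⁻¹ * rᵀ * G) * T' := by simp only [Matrix.mul_assoc]
    _ = T' := by rw [hright, Matrix.one_mul]

end Matrix

section Fiber

variable {F : Type} [Field F] {n k : ℕ} {G : Matrix (Fin k) (Fin k) F}
  {T : Matrix (Fin k) (Fin n) F}

lemma betaT_eq_betaT_iff {S S' : Matrix (Fin k) (Fin n) F} :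
    betaT G S = betaT G S' ↔ Sᵀ * G * S = S'ᵀ * G * S' := by
  simp only [funext_iff, betaT, mulVec_dotProduct_mulVec_mulVec]
  exact ⟨ext_of_dotProduct_mulVec, fun h x y => by rw [h]⟩

lemma betaT_mul_apply (S : Matrix (Fin k) (Fin n) F) (g : Matrix (Fin n) (Fin n) F)
    (x y : Fin n → F) : betaT G (S * g) x y = betaT G S (g *ᵥ x) (g *ᵥ y) := by
  simp only [betaT, mulVec_mulVec]

instance : MulAction (formStab F (Fin k) (fun u v => u ⬝ᵥ (G *ᵥ v))) (OmegaFiber F n k G T) where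
  smul r S := ⟨((r : (Matrix (Fin k) (Fin k) F)ˣ) : Matrix (Fin k) (Fin k) F) * S.1,
    (betaT_mul_left F n k G r r.2 S.1).trans S.2⟩
  one_smul S := Subtype.ext (Matrix.one_mul S.1)
  mul_smul _ _ S := Subtype.ext (Matrix.mul_assoc _ _ S.1)

instance : MulAction (formStab F (Fin n) (betaT G T))ᵐᵒᵖ (OmegaFiber F n k G T) where
  smul g S := ⟨S.1 * ((g.unop : (Matrix (Fin n) (Fin n) F)ˣ) : Matrix (Fin n) (Fin n) F),
    betaT_mul_right F n k G T g.unop g.unop.2 S.1 S.2⟩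
  one_smul S := Subtype.ext (Matrix.mul_one S.1)
  mul_smul _ _ S := Subtype.ext (Matrix.mul_assoc S.1 _ _).symm

instance : SMulCommClass (formStab F (Fin k) (fun u v => u ⬝ᵥ (G *ᵥ v)))
    (formStab F (Fin n) (betaT G T))ᵐᵒᵖ (OmegaFiber F n k G T) where
  smul_comm _ _ S := Subtype.ext (Matrix.mul_assoc _ S.1 _).symm

instance [Finite F] : Finite (OmegaFiber F n k G T) :=
  Subtype.finite

lemma range_opL : Set.range (opL F n k G T) =
    Set.range fun r : formStab F (Fin k) (fun u v => u ⬝ᵥ (G *ᵥ v)) =>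
      funLeft ℂ ℂ (r • · : OmegaFiber F n k G T → _) := by
  rw [← inv_surjective.range_comp]
  rfl

lemma range_opR : Set.range (opR F n k G T) =
    Set.range fun g : (formStab F (Fin n) (betaT G T))ᵐᵒᵖ =>
      funLeft ℂ ℂ (g • · : OmegaFiber F n k G T → _) := by
  rw [← MulOpposite.op_surjective.range_comp]
  rfl

variable (hG : IsUnit G) (hT : Function.Surjective T.mulVecLin)
include hG hT

lemma exists_mem_formStab_mul_eq_of_mem_fiber (S : OmegaFiber F n k G T) :
    ∃ r ∈ formStab F (Fin k) (fun u v => u ⬝ᵥ (G *ᵥ v)),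
      (r : Matrix (Fin k) (Fin k) F) * T = S.1 :=
  have ⟨_, hσ⟩ := mulVec_surjective_iff_exists_right_inverse.1 hT
  exists_mem_formStab_mul_eq hG hσ (betaT_eq_betaT_iff.1 S.2)

lemma isPretransitive_formStab :
    IsPretransitive (formStab F (Fin k) (fun u v => u ⬝ᵥ (G *ᵥ v)))
      (OmegaFiber F n k G T) :=
  .of_orbit (x₀ := ⟨T, rfl⟩) fun S =>
    have ⟨r, hr, hrT⟩ := exists_mem_formStab_mul_eq_of_mem_fiber hG hT S
    ⟨⟨r, hr⟩, Subtype.ext hrT⟩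

lemma isPretransitive_formStab_betaT :
    IsPretransitive (formStab F (Fin n) (betaT G T))ᵐᵒᵖ (OmegaFiber F n k G T) := by
  refine .of_orbit (x₀ := ⟨T, rfl⟩) fun S => ?_
  obtain ⟨r, -, hrT⟩ := exists_mem_formStab_mul_eq_of_mem_fiber hG hT S
  obtain ⟨σ, hσ⟩ := mulVec_surjective_iff_exists_right_inverse.1 hT
  obtain ⟨g, hgT⟩ := exists_mul_eq_unit_mul hσ r
  have hg : g ∈ formStab F (Fin n) (betaT G T) := fun x y => by
    rw [← betaT_mul_apply, hgT, hrT, S.2]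
  exact ⟨.op ⟨g, hg⟩, Subtype.ext (hgT.trans hrT)⟩

end Fiber

theorem double_commutant_on_fiber_general
    (F : Type) [Field F] [Fintype F]
    (n k : ℕ)
    (G : Matrix (Fin k) (Fin k) F) (hGnd : IsUnit G)
    (T : Matrix (Fin k) (Fin n) F) (hT : Function.Surjective T.mulVecLin) :
    Subalgebra.centralizer ℂ
        ((Algebra.adjoin ℂ (Set.range (opL F n k G T)) :
          Subalgebra ℂ ((OmegaFiber F n k G T → ℂ) →ₗ[ℂ] (OmegaFiber F n k G T → ℂ))) :
          Set ((OmegaFiber F n k G T → ℂ) →ₗ[ℂ] (OmegaFiber F n k G T → ℂ)))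
      = Algebra.adjoin ℂ (Set.range (opR F n k G T)) ∧
    Subalgebra.centralizer ℂ
        ((Algebra.adjoin ℂ (Set.range (opR F n k G T)) :
          Subalgebra ℂ ((OmegaFiber F n k G T → ℂ) →ₗ[ℂ] (OmegaFiber F n k G T → ℂ))) :
          Set ((OmegaFiber F n k G T → ℂ) →ₗ[ℂ] (OmegaFiber F n k G T → ℂ)))
      = Algebra.adjoin ℂ (Set.range (opL F n k G T)) := by
  have := isPretransitive_formStab hGnd hT
  have := isPretransitive_formStab_betaT hGnd hT
  have := SMulCommClass.symm (formStab F (Fin k) (fun u v => u ⬝ᵥ (G *ᵥ v)))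
    (formStab F (Fin n) (betaT G T))ᵐᵒᵖ (OmegaFiber F n k G T)
  rw [range_opL, range_opR]
  exact ⟨centralizer_permAlgebra, centralizer_permAlgebra⟩

/-- The algebras generated by the operators `L_r` (`r ∈ O_β`) and
`R_g` (`g ∈ G_{β_T}`) on the space of functions on the fiber `Ω` are each the full
commutant of the other. -/
theorem double_commutant_on_fiber
    (F : Type) [Field F] [Fintype F] [DecidableEq F] (hodd : Odd (Fintype.card F))
    (n k : ℕ)
    (G : Matrix (Fin k) (Fin k) F) (hG : G.IsSymm) (hGnd : IsUnit G)
    (T : Matrix (Fin k) (Fin n) F) (hT : Function.Surjective T.mulVecLin) :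
    Subalgebra.centralizer ℂ
        ((Algebra.adjoin ℂ (Set.range (opL F n k G T)) :
          Subalgebra ℂ ((OmegaFiber F n k G T → ℂ) →ₗ[ℂ] (OmegaFiber F n k G T → ℂ))) :
          Set ((OmegaFiber F n k G T → ℂ) →ₗ[ℂ] (OmegaFiber F n k G T → ℂ)))
      = Algebra.adjoin ℂ (Set.range (opR F n k G T)) ∧
    Subalgebra.centralizer ℂ
        ((Algebra.adjoin ℂ (Set.range (opR F n k G T)) :
          Subalgebra ℂ ((OmegaFiber F n k G T → ℂ) →ₗ[ℂ] (OmegaFiber F n k G T → ℂ))) :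
          Set ((OmegaFiber F n k G T → ℂ) →ₗ[ℂ] (OmegaFiber F n k G T → ℂ)))
      = Algebra.adjoin ℂ (Set.range (opL F n k G T)) :=
  double_commutant_on_fiber_general F n k G hGnd T hT
end
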